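/- arXiv:1202.5274 — 9 statements merged into one kernel-verified Lean document; each statement's English description precedes it below -/
import Mathlib

section
/- Under the global-pressure framework and for any discrete interface data, the sum of the upwind interface mobilities is bounded below by the total-mobility constant: M_{l,KL} + M_{g,KL} ≥ m0. -/
/-!
The capillary pressure `p̄ - p̃ = ∫₀ˢ p_c'` is strictly decreasing in the saturation, so the
jump `δp_g - δp_l` of the interface data orders `s_K` and `s_L`. The two upwind choices
disagree only when `δp_l ≤ 0 < δp_g` (forcing `s_L < s_K`) or `δp_g ≤ 0 < δp_l` (forcing
`s_K < s_L`); in either case the liquid is upwinded from the larger saturation, and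
monotonicity of `M_l` bounds the sum below by the total mobility at the smaller one.
-/

open Set intervalIntegral

theorem ContinuousOn.intervalIntegrable_of_mem_Icc {f : ℝ → ℝ} {a b x y : ℝ}
    (hf : ContinuousOn f (Icc a b)) (hx : x ∈ Icc a b) (hy : y ∈ Icc a b) :
    IntervalIntegrable f MeasureTheory.volume x y :=
  (hf.mono (uIcc_subset_Icc hx hy)).intervalIntegrable

theorem strictAntiOn_integral_of_neg {g : ℝ → ℝ} {a b : ℝ} (hg : ContinuousOn g (Icc a b))
    (hneg : ∀ x ∈ Icc a b, g x < 0) :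
    StrictAntiOn (fun s => ∫ z in a..s, g z) (Icc a b) := by
  intro x hx y hy hxy
  have ha : a ∈ Icc a b := left_mem_Icc.2 (hx.1.trans hx.2)
  have hxy_int := hg.intervalIntegrable_of_mem_Icc hx hy
  have hpos : 0 < ∫ z in x..y, -g z :=
    intervalIntegral_pos_of_pos_on hxy_int.neg
      (fun z hz => neg_pos.2 (hneg z ⟨hx.1.trans hz.1.le, hz.2.le.trans hy.2⟩)) hxy
  have hsplit := integral_interval_sub_left (hg.intervalIntegrable_of_mem_Icc ha hy)
    (hg.intervalIntegrable_of_mem_Icc ha hx)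
  rw [integral_neg] at hpos
  dsimp only
  linarith

theorem integral_div_add_integral_div_eq_integral {u v g : ℝ → ℝ} {a b s : ℝ}
    (hu : ContinuousOn u (Icc a b)) (hv : ContinuousOn v (Icc a b))
    (hg : ContinuousOn g (Icc a b)) (huv : ∀ x ∈ Icc a b, u x + v x ≠ 0)
    (hs : s ∈ Icc a b) :
    (∫ z in a..s, u z / (u z + v z) * g z) + ∫ z in a..s, v z / (u z + v z) * g z =
      ∫ z in a..s, g z := by
  have ha : a ∈ Icc a b := left_mem_Icc.2 (hs.1.trans hs.2)
  have hw : ContinuousOn (fun x => u x + v x) (Icc a b) := hu.add hv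
  have hui : IntervalIntegrable (fun z => u z / (u z + v z) * g z) MeasureTheory.volume a s :=
    ((hu.div hw huv).mul hg).intervalIntegrable_of_mem_Icc ha hs
  have hvi : IntervalIntegrable (fun z => v z / (u z + v z) * g z) MeasureTheory.volume a s :=
    ((hv.div hw huv).mul hg).intervalIntegrable_of_mem_Icc ha hs
  rw [← integral_add hui hvi]
  refine integral_congr fun z hz => ?_
  have := huv z (uIcc_subset_Icc ha hs hz)
  field_simp

theorem le_upwind_add_upwind {α : Type*} [LinearOrder α] {S : Set α} {F Ml Mg : α → ℝ}
    {m0 : ℝ} (hF : StrictAntiOn F S) (hMl : MonotoneOn Ml S)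
    (hM : ∀ s ∈ S, m0 ≤ Ml s + Mg s) {sK sL : α} (hsK : sK ∈ S) (hsL : sL ∈ S)
    {plK plL pgK pgL : ℝ} (hcapK : pgK - plK = F sK) (hcapL : pgL - plL = F sL) :
    m0 ≤ (if plL - plK ≤ 0 then Ml sK else Ml sL) +
      (if pgL - pgK ≤ 0 then Mg sK else Mg sL) := by
  split_ifs with hl hg
  · exact hM sK hsK
  · have : sL < sK := (hF.lt_iff_gt hsK hsL).1 (by linarith)
    linarith [hMl hsL hsK this.le, hM sL hsL]
  · have : sK < sL := (hF.lt_iff_gt hsL hsK).1 (by linarith)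
    linarith [hMl hsK hsL this.le, hM sK hsK]
  · exact hM sL hsL

theorem upwind_mobility_sum_lower_bound_general
    -- global-pressure framework
    (m0 : ℝ) (hm0 : 0 < m0)
    (pc' Ml Mg : ℝ → ℝ)
    (hpc'_cont : ContinuousOn pc' (Set.Icc 0 1))
    (hpc'_neg : ∀ s ∈ Set.Icc (0:ℝ) 1, pc' s < 0)
    (hMl_cont : ContinuousOn Ml (Set.Icc 0 1))
    (hMg_cont : ContinuousOn Mg (Set.Icc 0 1))
    (hMl_mono : MonotoneOn Ml (Set.Icc 0 1))
    (hM_lower : ∀ s ∈ Set.Icc (0:ℝ) 1, m0 ≤ Ml s + Mg s)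
    (ptilde pbar : ℝ → ℝ)
    (hptilde : ∀ s, ptilde s = -∫ z in (0:ℝ)..s, Ml z / (Ml z + Mg z) * pc' z)
    (hpbar : ∀ s, pbar s = ∫ z in (0:ℝ)..s, Mg z / (Ml z + Mg z) * pc' z)
    -- discrete interface data
    (sK sL : ℝ) (hsK : sK ∈ Set.Icc (0:ℝ) 1) (hsL : sL ∈ Set.Icc (0:ℝ) 1)
    (plK plL pgK pgL : ℝ)
    (hcapK : pgK - plK = pbar sK - ptilde sK)
    (hcapL : pgL - plL = pbar sL - ptilde sL)
    (MlKL MgKL : ℝ)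
    (hMlKL : MlKL = if plL - plK ≤ 0 then Ml sK else Ml sL)
    (hMgKL : MgKL = if pgL - pgK ≤ 0 then Mg sK else Mg sL) :
    m0 ≤ MlKL + MgKL := by
  have hM_ne : ∀ s ∈ Icc (0:ℝ) 1, Ml s + Mg s ≠ 0 := fun s hs =>
    (hm0.trans_le (hM_lower s hs)).ne'
  have hcap : ∀ s ∈ Icc (0:ℝ) 1, pbar s - ptilde s = ∫ z in (0:ℝ)..s, pc' z := fun s hs => by
    rw [hpbar, hptilde, sub_neg_eq_add, add_comm]
    exact integral_div_add_integral_div_eq_integral hMl_cont hMg_cont hpc'_cont hM_ne hs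
  rw [hcap sK hsK] at hcapK
  rw [hcap sL hsL] at hcapL
  rw [hMlKL, hMgKL]
  exact le_upwind_add_upwind (strictAntiOn_integral_of_neg hpc'_cont hpc'_neg) hMl_mono hM_lower
    hsK hsL hcapK hcapL

/-- Under the global-pressure framework and for any discrete interface
data, the sum of the upwind interface mobilities is bounded below by the
total-mobility constant: `M_{l,KL} + M_{g,KL} ≥ m0`. -/
theorem upwind_mobility_sum_lower_bound
    -- global-pressure framework
    (m0 : ℝ) (hm0 : 0 < m0)
    (pc pc' Ml Mg : ℝ → ℝ)
    (hpc_deriv : ∀ s ∈ Set.Icc (0:ℝ) 1, HasDerivWithinAt pc (pc' s) (Set.Icc 0 1) s)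
    (hpc'_cont : ContinuousOn pc' (Set.Icc 0 1))
    (hpc'_neg : ∀ s ∈ Set.Icc (0:ℝ) 1, pc' s < 0)
    (hMl_cont : ContinuousOn Ml (Set.Icc 0 1))
    (hMg_cont : ContinuousOn Mg (Set.Icc 0 1))
    (hMl_nonneg : ∀ s ∈ Set.Icc (0:ℝ) 1, 0 ≤ Ml s)
    (hMg_nonneg : ∀ s ∈ Set.Icc (0:ℝ) 1, 0 ≤ Mg s)
    (hMl_mono : MonotoneOn Ml (Set.Icc 0 1))
    (hMg_anti : AntitoneOn Mg (Set.Icc 0 1))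
    (hM_lower : ∀ s ∈ Set.Icc (0:ℝ) 1, m0 ≤ Ml s + Mg s)
    (ptilde pbar B : ℝ → ℝ)
    (hptilde : ∀ s, ptilde s = -∫ z in (0:ℝ)..s, Ml z / (Ml z + Mg z) * pc' z)
    (hpbar : ∀ s, pbar s = ∫ z in (0:ℝ)..s, Mg z / (Ml z + Mg z) * pc' z)
    (hB : ∀ s, B s = -∫ z in (0:ℝ)..s, Ml z * Mg z / (Ml z + Mg z) * pc' z)
    -- discrete interface data
    (sK sL : ℝ) (hsK : sK ∈ Set.Icc (0:ℝ) 1) (hsL : sL ∈ Set.Icc (0:ℝ) 1)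
    (plK plL pgK pgL : ℝ)
    (hcapK : pgK - plK = pbar sK - ptilde sK)
    (hcapL : pgL - plL = pbar sL - ptilde sL)
    (MlKL MgKL : ℝ)
    (hMlKL : MlKL = if plL - plK ≤ 0 then Ml sK else Ml sL)
    (hMgKL : MgKL = if pgL - pgK ≤ 0 then Mg sK else Mg sL) :
    m0 ≤ MlKL + MgKL :=
  upwind_mobility_sum_lower_bound_general m0 hm0 pc' Ml Mg hpc'_cont hpc'_neg hMl_cont hMg_cont
    hMl_mono hM_lower ptilde pbar hptilde hpbar sK sL hsK hsL plK plL pgK pgL hcapK hcapL MlKL MgKL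
    hMlKL hMgKL
end

section
/- Under the global-pressure framework and for any discrete interface data, the discrete global-pressure difference is controlled by the upwinded phase-pressure differences: m0 · (δp)² ≤ M_{l,KL} · (δp_l)² + M_{g,KL} · (δp_g)², where δp = p_L − p_K is the difference of the global pressures and δp_α = p_{α,L} − p_{α,K} for α ∈ {l,g}. -/
/-!
Orient the interface so that `s_K ≤ s_L` and put `u = p̃(s_L) - p̃(s_K) ≥ 0`,
`v = p̄(s_K) - p̄(s_L) ≥ 0`; then `δp_l = δp + v` and `δp_g = δp - u`.
If both phase differences have the sign of `δp`, both mobilities are taken in the same cell and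
the cross term `2 δp (M_l v - M_g u)` is nonnegative, because the monotonicity of the
mobilities under the integrals gives `M_g(s_L) u ≤ M_l(s_L) v` and `M_l(s_K) v ≤ M_g(s_K) u`.
If they have opposite signs, the identity `u (δp + v)² + v (δp - u)² = (u + v) (δp² + u v)`
combines with `m u ≤ M_l(s_L) (u + v)` and `m v ≤ M_g(s_K) (u + v)`.
-/

open Set intervalIntegral

/-- At `d = 0` either value is allowed: it only ever multiplies `d ^ 2`, and this makes the
notion invariant under reversing the orientation (`IsUpwind.neg`), unlike an `if`. -/
def IsUpwind (d a b A : ℝ) : Prop :=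
  d ≤ 0 ∧ A = a ∨ 0 ≤ d ∧ A = b

theorem isUpwind_ite (d a b : ℝ) : IsUpwind d a b (if d ≤ 0 then a else b) := by
  by_cases hd : d ≤ 0
  · exact .inl ⟨hd, if_pos hd⟩
  · exact .inr ⟨(not_le.1 hd).le, if_neg hd⟩

namespace IsUpwind

variable {d a b A : ℝ}

theorem neg (h : IsUpwind d a b A) : IsUpwind (-d) b a A :=
  (h.imp (And.imp_left neg_nonneg.2) (And.imp_left neg_nonpos.2)).symm

theorem mul_sq_of_nonneg (h : IsUpwind d a b A) (hd : 0 ≤ d) : A * d ^ 2 = b * d ^ 2 := by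
  rcases h with ⟨hd', rfl⟩ | ⟨-, rfl⟩
  · rw [le_antisymm hd' hd]
    ring
  · rfl

theorem mul_sq_of_nonpos (h : IsUpwind d a b A) (hd : d ≤ 0) : A * d ^ 2 = a * d ^ 2 := by
  simpa only [neg_sq] using h.neg.mul_sq_of_nonneg (neg_nonneg.2 hd)

end IsUpwind

section Algebra

variable {m a g u v x : ℝ}

theorem cocurrent_bound (hm : m ≤ a + g) (ha : 0 ≤ a) (hg : 0 ≤ g) (hgu : g * u ≤ a * v)
    (hx : 0 ≤ x) : m * x ^ 2 ≤ a * (x + v) ^ 2 + g * (x - u) ^ 2 := by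
  nlinarith [mul_le_mul_of_nonneg_right hm (sq_nonneg x), mul_nonneg hx (sub_nonneg.2 hgu),
    mul_nonneg ha (sq_nonneg v), mul_nonneg hg (sq_nonneg u)]

theorem countercurrent_bound (hm : 0 ≤ m) (hu : 0 ≤ u) (hv : 0 ≤ v) (ha : 0 ≤ a) (hg : 0 ≤ g)
    (hmu : m * u ≤ a * (u + v)) (hmv : m * v ≤ g * (u + v)) (hxu : x - u ≤ 0) (hxv : 0 ≤ x + v) :
    m * x ^ 2 ≤ a * (x + v) ^ 2 + g * (x - u) ^ 2 := by
  rcases (add_nonneg hu hv).eq_or_lt with huv | huv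
  · obtain rfl : x = 0 := by linarith
    rw [zero_pow two_ne_zero, mul_zero]
    positivity
  refine le_of_mul_le_mul_left ?_ huv
  calc (u + v) * (m * x ^ 2)
      ≤ m * (u * (x + v) ^ 2 + v * (x - u) ^ 2) := by
        nlinarith [mul_nonneg hm (mul_nonneg (mul_nonneg hu hv) huv.le)]
    _ = m * u * (x + v) ^ 2 + m * v * (x - u) ^ 2 := by ring
    _ ≤ a * (u + v) * (x + v) ^ 2 + g * (u + v) * (x - u) ^ 2 := by gcongr
    _ = (u + v) * (a * (x + v) ^ 2 + g * (x - u) ^ 2) := by ring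

theorem upwind_bound {aσ aτ gσ gτ Al Ag dl dg : ℝ} (hm : 0 ≤ m) (hu : 0 ≤ u) (hv : 0 ≤ v)
    (haσ : 0 ≤ aσ) (haτ : 0 ≤ aτ) (hgσ : 0 ≤ gσ) (hgτ : 0 ≤ gτ)
    (hmσ : m ≤ aσ + gσ) (hmτ : m ≤ aτ + gτ) (hσ : aσ * v ≤ gσ * u) (hτ : gτ * u ≤ aτ * v)
    (hmu : m * u ≤ aτ * (u + v)) (hmv : m * v ≤ gσ * (u + v))
    (hdl : dl = x + v) (hdg : dg = x - u)
    (hAl : IsUpwind dl aσ aτ Al) (hAg : IsUpwind dg gσ gτ Ag) :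
    m * x ^ 2 ≤ Al * dl ^ 2 + Ag * dg ^ 2 := by
  subst hdl hdg
  rcases le_or_gt 0 (x - u) with hg | hg
  · rw [hAl.mul_sq_of_nonneg (by linarith), hAg.mul_sq_of_nonneg hg]
    exact cocurrent_bound hmτ haτ hgτ hτ (by linarith)
  rcases le_or_gt (x + v) 0 with hl | hl
  · rw [hAl.mul_sq_of_nonpos hl, hAg.mul_sq_of_nonpos hg.le]
    have key := cocurrent_bound (x := -x) (add_comm aσ gσ ▸ hmσ) hgσ haσ hσ (by linarith)
    calc m * x ^ 2 = m * (-x) ^ 2 := by ring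
      _ ≤ _ := key
      _ = _ := by ring
  · rw [hAl.mul_sq_of_nonneg hl.le, hAg.mul_sq_of_nonpos hg.le]
    exact countercurrent_bound hm hu hv haτ hgσ hmu hmv hg.le hl.le

end Algebra

theorem integral_interval_sub_left_of_continuousOn {f : ℝ → ℝ} {a b σ τ : ℝ}
    (hf : ContinuousOn f (Icc a b)) (hσ : σ ∈ Icc a b) (hτ : τ ∈ Icc a b) :
    (∫ z in a..τ, f z) - ∫ z in a..σ, f z = ∫ z in σ..τ, f z := by
  have ha : a ∈ Icc a b := left_mem_Icc.2 (hσ.1.trans hσ.2)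
  exact integral_interval_sub_left (hf.mono (uIcc_subset_Icc ha hτ)).intervalIntegrable
    (hf.mono (uIcc_subset_Icc ha hσ)).intervalIntegrable

theorem mul_integral_mul_le_mul_integral_mul {f g q : ℝ → ℝ} {a b c d : ℝ} (hab : a ≤ b)
    (hf : ContinuousOn f (Icc a b)) (hg : ContinuousOn g (Icc a b))
    (hq : ContinuousOn q (Icc a b)) (hq0 : ∀ z ∈ Icc a b, 0 ≤ q z)
    (hfg : ∀ z ∈ Icc a b, c * f z ≤ d * g z) :
    c * ∫ z in a..b, f z * q z ≤ d * ∫ z in a..b, g z * q z := by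
  rw [← integral_const_mul, ← integral_const_mul]
  refine integral_mono_on hab (((hf.mul hq).const_mul c).intervalIntegrable_of_Icc hab)
    (((hg.mul hq).const_mul d).intervalIntegrable_of_Icc hab) fun z hz => ?_
  simpa only [mul_assoc] using mul_le_mul_of_nonneg_right (hfg z hz) (hq0 z hz)

structure AdmissibleMobilities (m : ℝ) (Ml Mg : ℝ → ℝ) (s : Set ℝ) : Prop where
  pos : 0 < m
  continuousOn_l : ContinuousOn Ml s
  continuousOn_g : ContinuousOn Mg s
  nonneg_l : ∀ z ∈ s, 0 ≤ Ml z
  nonneg_g : ∀ z ∈ s, 0 ≤ Mg z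
  monotoneOn_l : MonotoneOn Ml s
  antitoneOn_g : AntitoneOn Mg s
  le_add : ∀ z ∈ s, m ≤ Ml z + Mg z

namespace AdmissibleMobilities

variable {m σ τ : ℝ} {Ml Mg q : ℝ → ℝ} {s t : Set ℝ}

theorem mono (h : AdmissibleMobilities m Ml Mg s) (hts : t ⊆ s) : AdmissibleMobilities m Ml Mg t :=
  ⟨h.pos, h.continuousOn_l.mono hts, h.continuousOn_g.mono hts,
    fun z hz => h.nonneg_l z (hts hz), fun z hz => h.nonneg_g z (hts hz),
    h.monotoneOn_l.mono hts, h.antitoneOn_g.mono hts, fun z hz => h.le_add z (hts hz)⟩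

theorem add_pos (h : AdmissibleMobilities m Ml Mg s) {z : ℝ} (hz : z ∈ s) : 0 < Ml z + Mg z :=
  h.pos.trans_le (h.le_add z hz)

theorem continuousOn_div_l (h : AdmissibleMobilities m Ml Mg s) :
    ContinuousOn (fun z => Ml z / (Ml z + Mg z)) s :=
  h.continuousOn_l.div (h.continuousOn_l.add h.continuousOn_g) fun _ hz => (h.add_pos hz).ne'

theorem continuousOn_div_g (h : AdmissibleMobilities m Ml Mg s) :
    ContinuousOn (fun z => Mg z / (Ml z + Mg z)) s :=
  h.continuousOn_g.div (h.continuousOn_l.add h.continuousOn_g) fun _ hz => (h.add_pos hz).ne'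

theorem integral_div_add_integral_div (h : AdmissibleMobilities m Ml Mg (Icc σ τ))
    (hστ : σ ≤ τ) (hq : ContinuousOn q (Icc σ τ)) :
    (∫ z in σ..τ, Ml z / (Ml z + Mg z) * q z) + ∫ z in σ..τ, Mg z / (Ml z + Mg z) * q z =
      ∫ z in σ..τ, q z := by
  rw [← integral_add ((h.continuousOn_div_l.fun_mul hq).intervalIntegrable_of_Icc hστ)
    ((h.continuousOn_div_g.fun_mul hq).intervalIntegrable_of_Icc hστ)]
  refine integral_congr fun z hz => ?_
  rw [uIcc_of_le hστ] at hz
  simp only [← add_mul, ← add_div, div_self (h.add_pos hz).ne', one_mul]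

theorem increment_bounds (h : AdmissibleMobilities m Ml Mg (Icc σ τ)) (hστ : σ ≤ τ)
    (hq : ContinuousOn q (Icc σ τ)) (hq0 : ∀ z ∈ Icc σ τ, 0 ≤ q z) {u v : ℝ}
    (hu : u = ∫ z in σ..τ, Ml z / (Ml z + Mg z) * q z)
    (hv : v = ∫ z in σ..τ, Mg z / (Ml z + Mg z) * q z) :
    0 ≤ u ∧ 0 ≤ v ∧ Ml σ * v ≤ Mg σ * u ∧ Mg τ * u ≤ Ml τ * v ∧
      m * u ≤ Ml τ * (u + v) ∧ m * v ≤ Mg σ * (u + v) := by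
  have hσ : σ ∈ Icc σ τ := left_mem_Icc.2 hστ
  have hτ : τ ∈ Icc σ τ := right_mem_Icc.2 hστ
  have huv : u + v = ∫ z in σ..τ, 1 * q z := by
    simp only [one_mul, hu, hv, h.integral_div_add_integral_div hστ hq]
  have mul_div_le_mul_div {c d x y w : ℝ} (hx : 0 ≤ x) (hy : 0 ≤ y) (hcy : c ≤ y) (hxd : x ≤ d)
      (hw : 0 ≤ w) : c * (x / w) ≤ d * (y / w) := by
    rw [← mul_div_assoc, ← mul_div_assoc]
    exact div_le_div_of_nonneg_right (by nlinarith) hw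
  have mul_div_le_self {x w : ℝ} (hx : 0 ≤ x) (hmw : m ≤ w) (hw : 0 < w) : m * (x / w) ≤ x := by
    rw [← mul_div_assoc, div_le_iff₀ hw]
    nlinarith
  refine ⟨hu ▸ integral_nonneg hστ fun z hz =>
      mul_nonneg (div_nonneg (h.nonneg_l z hz) (h.add_pos hz).le) (hq0 z hz),
    hv ▸ integral_nonneg hστ fun z hz =>
      mul_nonneg (div_nonneg (h.nonneg_g z hz) (h.add_pos hz).le) (hq0 z hz), ?_, ?_, ?_, ?_⟩
  · rw [hu, hv]
    exact mul_integral_mul_le_mul_integral_mul hστ h.continuousOn_div_g h.continuousOn_div_l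
      hq hq0 fun z hz => mul_div_le_mul_div (h.nonneg_g z hz) (h.nonneg_l z hz)
        (h.monotoneOn_l hσ hz hz.1) (h.antitoneOn_g hσ hz hz.1) (h.add_pos hz).le
  · rw [hu, hv]
    exact mul_integral_mul_le_mul_integral_mul hστ h.continuousOn_div_l h.continuousOn_div_g
      hq hq0 fun z hz => mul_div_le_mul_div (h.nonneg_l z hz) (h.nonneg_g z hz)
        (h.antitoneOn_g hz hτ hz.2) (h.monotoneOn_l hz hτ hz.2) (h.add_pos hz).le
  · rw [huv, hu]
    refine mul_integral_mul_le_mul_integral_mul hστ h.continuousOn_div_l continuousOn_const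
      hq hq0 fun z hz => ?_
    rw [mul_one]
    exact (mul_div_le_self (h.nonneg_l z hz) (h.le_add z hz) (h.add_pos hz)).trans
      (h.monotoneOn_l hz hτ hz.2)
  · rw [huv, hv]
    refine mul_integral_mul_le_mul_integral_mul hστ h.continuousOn_div_g continuousOn_const
      hq hq0 fun z hz => ?_
    rw [mul_one]
    exact (mul_div_le_self (h.nonneg_g z hz) (h.le_add z hz) (h.add_pos hz)).trans
      (h.antitoneOn_g hσ hz hz.1)

theorem upwind_bound_of_le (h : AdmissibleMobilities m Ml Mg (Icc 0 1))
    (hq : ContinuousOn q (Icc 0 1)) (hq0 : ∀ z ∈ Icc (0 : ℝ) 1, 0 ≤ q z) {ptilde pbar : ℝ → ℝ}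
    (hptilde : ∀ s, ptilde s = ∫ z in (0 : ℝ)..s, Ml z / (Ml z + Mg z) * q z)
    (hpbar : ∀ s, pbar s = -∫ z in (0 : ℝ)..s, Mg z / (Ml z + Mg z) * q z)
    (hσ : σ ∈ Icc (0 : ℝ) 1) (hτ : τ ∈ Icc (0 : ℝ) 1) (hστ : σ ≤ τ) {x dl dg Al Ag : ℝ}
    (hdl : dl = x + (pbar σ - pbar τ)) (hdg : dg = x - (ptilde τ - ptilde σ))
    (hAl : IsUpwind dl (Ml σ) (Ml τ) Al) (hAg : IsUpwind dg (Mg σ) (Mg τ) Ag) :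
    m * x ^ 2 ≤ Al * dl ^ 2 + Ag * dg ^ 2 := by
  have hsub : Icc σ τ ⊆ Icc 0 1 := Icc_subset_Icc hσ.1 hτ.2
  have hu : ptilde τ - ptilde σ = ∫ z in σ..τ, Ml z / (Ml z + Mg z) * q z := by
    rw [hptilde, hptilde]
    exact integral_interval_sub_left_of_continuousOn (h.continuousOn_div_l.fun_mul hq) hσ hτ
  have hv : pbar σ - pbar τ = ∫ z in σ..τ, Mg z / (Ml z + Mg z) * q z := by
    rw [hpbar, hpbar, neg_sub_neg]
    exact integral_interval_sub_left_of_continuousOn (h.continuousOn_div_g.fun_mul hq) hσ hτ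
  obtain ⟨hu0, hv0, hlσ, hgτ, hmu, hmv⟩ := (h.mono hsub).increment_bounds hστ (hq.mono hsub)
    (fun z hz => hq0 z (hsub hz)) hu hv
  exact upwind_bound h.pos.le hu0 hv0 (h.nonneg_l σ hσ) (h.nonneg_l τ hτ) (h.nonneg_g σ hσ)
    (h.nonneg_g τ hτ) (h.le_add σ hσ) (h.le_add τ hτ) hlσ hgτ hmu hmv hdl hdg hAl hAg

end AdmissibleMobilities

theorem global_pressure_difference_controlled_general
    -- global-pressure framework
    (m0 : ℝ) (hm0 : 0 < m0)
    (pc' Ml Mg : ℝ → ℝ)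
    (hpc'_cont : ContinuousOn pc' (Set.Icc 0 1))
    (hpc'_neg : ∀ s ∈ Set.Icc (0:ℝ) 1, pc' s < 0)
    (hMl_cont : ContinuousOn Ml (Set.Icc 0 1))
    (hMg_cont : ContinuousOn Mg (Set.Icc 0 1))
    (hMl_nonneg : ∀ s ∈ Set.Icc (0:ℝ) 1, 0 ≤ Ml s)
    (hMg_nonneg : ∀ s ∈ Set.Icc (0:ℝ) 1, 0 ≤ Mg s)
    (hMl_mono : MonotoneOn Ml (Set.Icc 0 1))
    (hMg_anti : AntitoneOn Mg (Set.Icc 0 1))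
    (hM_lower : ∀ s ∈ Set.Icc (0:ℝ) 1, m0 ≤ Ml s + Mg s)
    (ptilde pbar : ℝ → ℝ)
    (hptilde : ∀ s, ptilde s = -∫ z in (0:ℝ)..s, Ml z / (Ml z + Mg z) * pc' z)
    (hpbar : ∀ s, pbar s = ∫ z in (0:ℝ)..s, Mg z / (Ml z + Mg z) * pc' z)
    -- discrete interface data
    (sK sL : ℝ) (hsK : sK ∈ Set.Icc (0:ℝ) 1) (hsL : sL ∈ Set.Icc (0:ℝ) 1)
    (plK plL pgK pgL : ℝ)
    (hcapK : pgK - plK = pbar sK - ptilde sK)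
    (hcapL : pgL - plL = pbar sL - ptilde sL)
    (pK pL : ℝ)
    (hpK : pK = plK + pbar sK) (hpL : pL = plL + pbar sL)
    (MlKL MgKL : ℝ)
    (hMlKL : MlKL = if plL - plK ≤ 0 then Ml sK else Ml sL)
    (hMgKL : MgKL = if pgL - pgK ≤ 0 then Mg sK else Mg sL) :
    m0 * (pL - pK) ^ 2 ≤ MlKL * (plL - plK) ^ 2 + MgKL * (pgL - pgK) ^ 2 := by
  have hmob : AdmissibleMobilities m0 Ml Mg (Icc 0 1) :=
    ⟨hm0, hMl_cont, hMg_cont, hMl_nonneg, hMg_nonneg, hMl_mono, hMg_anti, hM_lower⟩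
  have hq0 : ∀ z ∈ Icc (0 : ℝ) 1, 0 ≤ -pc' z := fun z hz => neg_nonneg.2 (hpc'_neg z hz).le
  have hptilde' (s : ℝ) : ptilde s = ∫ z in (0 : ℝ)..s, Ml z / (Ml z + Mg z) * -pc' z := by
    simp only [hptilde, mul_neg, integral_neg]
  have hpbar' (s : ℝ) : pbar s = -∫ z in (0 : ℝ)..s, Mg z / (Ml z + Mg z) * -pc' z := by
    simp only [hpbar, mul_neg, integral_neg, neg_neg]
  have hl : IsUpwind (plL - plK) (Ml sK) (Ml sL) MlKL := hMlKL ▸ isUpwind_ite _ _ _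
  have hg : IsUpwind (pgL - pgK) (Mg sK) (Mg sL) MgKL := hMgKL ▸ isUpwind_ite _ _ _
  rcases le_total sK sL with h | h
  · exact hmob.upwind_bound_of_le hpc'_cont.neg hq0 hptilde' hpbar' hsK hsL h
      (by linarith) (by linarith) hl hg
  · have key := hmob.upwind_bound_of_le hpc'_cont.neg hq0 hptilde' hpbar' hsL hsK h
      (x := pK - pL) (by linarith) (by linarith) hl.neg hg.neg
    calc m0 * (pL - pK) ^ 2 = m0 * (pK - pL) ^ 2 := by ring
      _ ≤ _ := key
      _ = _ := by ring

/-- Under the global-pressure framework and for any discrete interface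
data, the discrete global-pressure difference is controlled by the upwinded
phase-pressure differences: `m0 · (δp)² ≤ M_{l,KL} · (δp_l)² + M_{g,KL} · (δp_g)²`,
where `δp = p_L − p_K` is the difference of the global pressures
`p_i = p_{l,i} + p̄(s_i)`. -/
theorem global_pressure_difference_controlled
    -- global-pressure framework
    (m0 : ℝ) (hm0 : 0 < m0)
    (pc pc' Ml Mg : ℝ → ℝ)
    (hpc_deriv : ∀ s ∈ Set.Icc (0:ℝ) 1, HasDerivWithinAt pc (pc' s) (Set.Icc 0 1) s)
    (hpc'_cont : ContinuousOn pc' (Set.Icc 0 1))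
    (hpc'_neg : ∀ s ∈ Set.Icc (0:ℝ) 1, pc' s < 0)
    (hMl_cont : ContinuousOn Ml (Set.Icc 0 1))
    (hMg_cont : ContinuousOn Mg (Set.Icc 0 1))
    (hMl_nonneg : ∀ s ∈ Set.Icc (0:ℝ) 1, 0 ≤ Ml s)
    (hMg_nonneg : ∀ s ∈ Set.Icc (0:ℝ) 1, 0 ≤ Mg s)
    (hMl_mono : MonotoneOn Ml (Set.Icc 0 1))
    (hMg_anti : AntitoneOn Mg (Set.Icc 0 1))
    (hM_lower : ∀ s ∈ Set.Icc (0:ℝ) 1, m0 ≤ Ml s + Mg s)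
    (ptilde pbar B : ℝ → ℝ)
    (hptilde : ∀ s, ptilde s = -∫ z in (0:ℝ)..s, Ml z / (Ml z + Mg z) * pc' z)
    (hpbar : ∀ s, pbar s = ∫ z in (0:ℝ)..s, Mg z / (Ml z + Mg z) * pc' z)
    (hB : ∀ s, B s = -∫ z in (0:ℝ)..s, Ml z * Mg z / (Ml z + Mg z) * pc' z)
    -- discrete interface data
    (sK sL : ℝ) (hsK : sK ∈ Set.Icc (0:ℝ) 1) (hsL : sL ∈ Set.Icc (0:ℝ) 1)
    (plK plL pgK pgL : ℝ)
    (hcapK : pgK - plK = pbar sK - ptilde sK)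
    (hcapL : pgL - plL = pbar sL - ptilde sL)
    (pK pL : ℝ)
    (hpK : pK = plK + pbar sK) (hpL : pL = plL + pbar sL)
    (MlKL MgKL : ℝ)
    (hMlKL : MlKL = if plL - plK ≤ 0 then Ml sK else Ml sL)
    (hMgKL : MgKL = if pgL - pgK ≤ 0 then Mg sK else Mg sL) :
    m0 * (pL - pK) ^ 2 ≤ MlKL * (plL - plK) ^ 2 + MgKL * (pgL - pgK) ^ 2 :=
  global_pressure_difference_controlled_general m0 hm0 pc' Ml Mg hpc'_cont hpc'_neg hMl_cont
    hMg_cont hMl_nonneg hMg_nonneg hMl_mono hMg_anti hM_lower ptilde pbar hptilde hpbar sK sL hsK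
    hsL plK plL pgK pgL hcapK hcapL pK pL hpK hpL MlKL MgKL hMlKL hMgKL
end

section
/- There exists a constant C > 0, depending only on p_c, M_l, M_g and m0, such that under the global-pressure framework, for every choice of discrete interface data, the difference of the capillary function B is controlled by the upwinded phase-pressure differences: (B(s_L) − B(s_K))² ≤ C · ( M_{l,KL} · (δp_l)² + M_{g,KL} · (δp_g)² ). -/
/-!
With `w = -p_c' / M ≥ 0` one has `p̃' = M_l w`, `-p̄' = M_g w` and `B' = M_l M_g w`, so for
`s_K ≤ s_L` the monotonicity of the mobilities gives `0 ≤ δB ≤ M_l(s_L) (-δp̄)` and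
`δB ≤ M_g(s_K) δp̃`. Both phases see the same increment `δp = δp_l + δp̄ = δp_g + δp̃` of the
global pressure. If `δp ≥ 0` then `δp_l ≥ -δp̄ ≥ 0`, the liquid is upwinded at `s_L` and
`δB ≤ M_l(s_L) δp_l`; if `δp ≤ 0` then `-δp_g ≥ δp̃ ≥ 0`, the gas is upwinded at `s_K` and
`δB ≤ M_g(s_K) (-δp_g)`. Squaring gives the estimate with `C = M_l(1) + M_g(0) ≥ m0`.
-/

open Set intervalIntegral MeasureTheory

noncomputable def upwind (M : ℝ → ℝ) (sK sL δ : ℝ) : ℝ := if δ ≤ 0 then M sK else M sL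

lemma upwind_nonneg {M : ℝ → ℝ} {sK sL : ℝ} (hK : 0 ≤ M sK) (hL : 0 ≤ M sL) (δ : ℝ) :
    0 ≤ upwind M sK sL δ := by
  unfold upwind; split_ifs <;> assumption

lemma upwind_mul_sq_swap (M : ℝ → ℝ) (sK sL a b : ℝ) :
    upwind M sL sK (a - b) * (a - b) ^ 2 = upwind M sK sL (b - a) * (b - a) ^ 2 := by
  unfold upwind
  rcases lt_trichotomy a b with h | rfl | h
  · rw [if_pos (by linarith), if_neg (by linarith)]; ring
  · simp
  · rw [if_neg (by linarith), if_pos (by linarith)]; ring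

lemma sq_le_mul_mul_sq_of_le_mul {x m y C : ℝ} (hx : 0 ≤ x) (hxy : x ≤ m * y) (hm : 0 ≤ m)
    (hmC : m ≤ C) : x ^ 2 ≤ C * (m * y ^ 2) :=
  calc x ^ 2 ≤ (m * y) ^ 2 := pow_le_pow_left₀ hx hxy 2
    _ = m * (m * y ^ 2) := by ring
    _ ≤ C * (m * y ^ 2) := mul_le_mul_of_nonneg_right hmC (mul_nonneg hm (sq_nonneg y))

lemma sq_le_mul_upwind_of_le_right {M : ℝ → ℝ} {sK sL δ x C : ℝ} (hK : 0 ≤ M sK)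
    (hL : 0 ≤ M sL) (hC : M sL ≤ C) (hx : 0 ≤ x) (hxδ : x ≤ M sL * δ) :
    x ^ 2 ≤ C * (upwind M sK sL δ * δ ^ 2) := by
  unfold upwind
  split_ifs with hδ
  · obtain rfl : x = 0 := le_antisymm (hxδ.trans (mul_nonpos_of_nonneg_of_nonpos hL hδ)) hx
    simpa using mul_nonneg (hL.trans hC) (mul_nonneg hK (sq_nonneg δ))
  · exact sq_le_mul_mul_sq_of_le_mul hx hxδ hL hC

lemma sq_le_mul_upwind_of_le_left {M : ℝ → ℝ} {sK sL δ x C : ℝ} (hK : 0 ≤ M sK)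
    (hL : 0 ≤ M sL) (hC : M sK ≤ C) (hx : 0 ≤ x) (hxδ : x ≤ M sK * -δ) :
    x ^ 2 ≤ C * (upwind M sK sL δ * δ ^ 2) := by
  unfold upwind
  split_ifs with hδ
  · simpa using sq_le_mul_mul_sq_of_le_mul hx hxδ hK hC
  · obtain rfl : x = 0 :=
      le_antisymm (hxδ.trans (mul_nonpos_of_nonneg_of_nonpos hK (by linarith))) hx
    simpa using mul_nonneg (hK.trans hC) (mul_nonneg hL (sq_nonneg δ))

lemma sq_le_upwind_sum {Ml Mg : ℝ → ℝ} {sK sL x dl dg dbar dt C : ℝ}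
    (hMlK : 0 ≤ Ml sK) (hMlL : 0 ≤ Ml sL) (hMgK : 0 ≤ Mg sK) (hMgL : 0 ≤ Mg sL)
    (hMlC : Ml sL ≤ C) (hMgC : Mg sK ≤ C) (hglobal : dl + dbar = dg + dt)
    (hx : 0 ≤ x) (hxl : x ≤ Ml sL * -dbar) (hxg : x ≤ Mg sK * dt) :
    x ^ 2 ≤ C * (upwind Ml sK sL dl * dl ^ 2 + upwind Mg sK sL dg * dg ^ 2) := by
  have hC : 0 ≤ C := hMlL.trans hMlC
  have hl := mul_nonneg hC (mul_nonneg (upwind_nonneg hMlK hMlL dl) (sq_nonneg dl))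
  have hg := mul_nonneg hC (mul_nonneg (upwind_nonneg hMgK hMgL dg) (sq_nonneg dg))
  rw [mul_add]
  rcases le_total 0 (dl + dbar) with hp | hp
  · have := sq_le_mul_upwind_of_le_right (sK := sK) (δ := dl) hMlK hMlL hMlC hx
      (hxl.trans (mul_le_mul_of_nonneg_left (by linarith) hMlL))
    linarith
  · have := sq_le_mul_upwind_of_le_left (sL := sL) (δ := dg) hMgK hMgL hMgC hx
      (hxg.trans (mul_le_mul_of_nonneg_left (by linarith) hMgK))
    linarith

lemma integral_mul_le_of_monotoneOn {f g : ℝ → ℝ} {a b : ℝ} (hab : a ≤ b)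
    (hf : MonotoneOn f (Icc a b)) (hg : ∀ z ∈ Icc a b, 0 ≤ g z)
    (hfg : IntervalIntegrable (fun z ↦ f z * g z) volume a b)
    (hgi : IntervalIntegrable g volume a b) :
    ∫ z in a..b, f z * g z ≤ f b * ∫ z in a..b, g z := by
  rw [← intervalIntegral.integral_const_mul]
  exact integral_mono_on hab hfg (hgi.const_mul _) fun z hz ↦
    mul_le_mul_of_nonneg_right (hf hz (right_mem_Icc.2 hab) hz.2) (hg z hz)

lemma integral_mul_le_of_antitoneOn {f g : ℝ → ℝ} {a b : ℝ} (hab : a ≤ b)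
    (hf : AntitoneOn f (Icc a b)) (hg : ∀ z ∈ Icc a b, 0 ≤ g z)
    (hfg : IntervalIntegrable (fun z ↦ f z * g z) volume a b)
    (hgi : IntervalIntegrable g volume a b) :
    ∫ z in a..b, f z * g z ≤ f a * ∫ z in a..b, g z := by
  rw [← intervalIntegral.integral_const_mul]
  exact integral_mono_on hab hfg (hgi.const_mul _) fun z hz ↦
    mul_le_mul_of_nonneg_right (hf (left_mem_Icc.2 hab) hz hz.1) (hg z hz)

lemma integral_sub_integral_of_continuousOn {f : ℝ → ℝ} {s : Set ℝ} [s.OrdConnected]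
    (hf : ContinuousOn f s) {a b c : ℝ} (ha : a ∈ s) (hb : b ∈ s) (hc : c ∈ s) :
    (∫ z in a..b, f z) - ∫ z in a..c, f z = ∫ z in c..b, f z :=
  integral_interval_sub_left (μ := volume)
    (hf.mono (OrdConnected.uIcc_subset ‹_› ha hb)).intervalIntegrable
    (hf.mono (OrdConnected.uIcc_subset ‹_› ha hc)).intervalIntegrable

noncomputable def capillaryWeight (Ml Mg pc' : ℝ → ℝ) (z : ℝ) : ℝ := -pc' z / (Ml z + Mg z)

lemma capillary_increment_bounds {pc' Ml Mg ptilde pbar B : ℝ → ℝ}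
    (hpc'_cont : ContinuousOn pc' (Icc 0 1)) (hpc'_neg : ∀ s ∈ Icc (0:ℝ) 1, pc' s < 0)
    (hMl_cont : ContinuousOn Ml (Icc 0 1)) (hMg_cont : ContinuousOn Mg (Icc 0 1))
    (hMl_nonneg : ∀ s ∈ Icc (0:ℝ) 1, 0 ≤ Ml s) (hMg_nonneg : ∀ s ∈ Icc (0:ℝ) 1, 0 ≤ Mg s)
    (hMl_mono : MonotoneOn Ml (Icc 0 1)) (hMg_anti : AntitoneOn Mg (Icc 0 1))
    (hM_pos : ∀ s ∈ Icc (0:ℝ) 1, 0 < Ml s + Mg s)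
    (hptilde : ∀ s, ptilde s = -∫ z in (0:ℝ)..s, Ml z / (Ml z + Mg z) * pc' z)
    (hpbar : ∀ s, pbar s = ∫ z in (0:ℝ)..s, Mg z / (Ml z + Mg z) * pc' z)
    (hB : ∀ s, B s = -∫ z in (0:ℝ)..s, Ml z * Mg z / (Ml z + Mg z) * pc' z)
    {sK sL : ℝ} (hsK : sK ∈ Icc (0:ℝ) 1) (hsL : sL ∈ Icc (0:ℝ) 1) (hKL : sK ≤ sL) :
    0 ≤ B sL - B sK ∧ B sL - B sK ≤ Ml sL * -(pbar sL - pbar sK) ∧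
      B sL - B sK ≤ Mg sK * (ptilde sL - ptilde sK) := by
  set w := capillaryWeight Ml Mg pc'
  have h0 : (0:ℝ) ∈ Icc (0:ℝ) 1 := left_mem_Icc.2 zero_le_one
  have hKL_sub : Icc sK sL ⊆ Icc 0 1 := Icc_subset_Icc hsK.1 hsL.2
  have hw_cont : ContinuousOn w (Icc 0 1) :=
    hpc'_cont.neg.div (hMl_cont.add hMg_cont) fun s hs ↦ (hM_pos s hs).ne'
  have hw_nonneg : ∀ z ∈ Icc (0:ℝ) 1, 0 ≤ w z := fun z hz ↦
    div_nonneg (neg_nonneg.2 (hpc'_neg z hz).le) (hM_pos z hz).le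
  have hlw_cont := hMl_cont.mul hw_cont
  have hgw_cont := hMg_cont.mul hw_cont
  have hlgw_cont := hMl_cont.mul hgw_cont
  have integrable {f : ℝ → ℝ} (hf : ContinuousOn f (Icc 0 1)) :
      IntervalIntegrable f volume sK sL :=
    (hf.mono (uIcc_subset_Icc hsK hsL)).intervalIntegrable
  have increment {F f : ℝ → ℝ} (hf : ContinuousOn f (Icc 0 1))
      (hF : ∀ s, F s = ∫ z in (0:ℝ)..s, f z) : F sL - F sK = ∫ z in sK..sL, f z := by
    rw [hF, hF, integral_sub_integral_of_continuousOn hf h0 hsL hsK]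
  have weighted (a : ℝ → ℝ) (s : ℝ) :
      -∫ z in (0:ℝ)..s, a z / (Ml z + Mg z) * pc' z = ∫ z in (0:ℝ)..s, a z * w z := by
    rw [← intervalIntegral.integral_neg]; congr 1 with z
    simp only [w, capillaryWeight]; ring
  have eB : B sL - B sK = ∫ z in sK..sL, Ml z * (Mg z * w z) :=
    increment hlgw_cont fun s ↦ by simp_rw [hB, weighted (fun z ↦ Ml z * Mg z), mul_assoc]
  have ebar : -(pbar sL - pbar sK) = ∫ z in sK..sL, Mg z * w z :=
    (neg_sub' _ _).trans <| increment (F := fun s ↦ -pbar s) hgw_cont fun s ↦ by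
      rw [hpbar, weighted]
  have etilde : ptilde sL - ptilde sK = ∫ z in sK..sL, Ml z * w z :=
    increment hlw_cont fun s ↦ by rw [hptilde, weighted]
  refine ⟨?_, ?_, ?_⟩
  · rw [eB]
    exact integral_nonneg hKL fun z hz ↦ mul_nonneg (hMl_nonneg z (hKL_sub hz))
      (mul_nonneg (hMg_nonneg z (hKL_sub hz)) (hw_nonneg z (hKL_sub hz)))
  · rw [eB, ebar]
    exact integral_mul_le_of_monotoneOn hKL (hMl_mono.mono hKL_sub)
      (fun z hz ↦ mul_nonneg (hMg_nonneg z (hKL_sub hz)) (hw_nonneg z (hKL_sub hz)))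
      (integrable hlgw_cont) (integrable hgw_cont)
  · rw [eB, etilde]
    simp_rw [mul_left_comm (Ml _)]
    exact integral_mul_le_of_antitoneOn hKL (hMg_anti.mono hKL_sub)
      (fun z hz ↦ mul_nonneg (hMl_nonneg z (hKL_sub hz)) (hw_nonneg z (hKL_sub hz)))
      (integrable (hMg_cont.mul hlw_cont)) (integrable hlw_cont)

theorem capillary_term_estimate_general
    -- global-pressure framework
    (m0 : ℝ) (hm0 : 0 < m0)
    (pc' Ml Mg : ℝ → ℝ)
    (hpc'_cont : ContinuousOn pc' (Set.Icc 0 1))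
    (hpc'_neg : ∀ s ∈ Set.Icc (0:ℝ) 1, pc' s < 0)
    (hMl_cont : ContinuousOn Ml (Set.Icc 0 1))
    (hMg_cont : ContinuousOn Mg (Set.Icc 0 1))
    (hMl_nonneg : ∀ s ∈ Set.Icc (0:ℝ) 1, 0 ≤ Ml s)
    (hMg_nonneg : ∀ s ∈ Set.Icc (0:ℝ) 1, 0 ≤ Mg s)
    (hMl_mono : MonotoneOn Ml (Set.Icc 0 1))
    (hMg_anti : AntitoneOn Mg (Set.Icc 0 1))
    (hM_lower : ∀ s ∈ Set.Icc (0:ℝ) 1, m0 ≤ Ml s + Mg s)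
    (ptilde pbar B : ℝ → ℝ)
    (hptilde : ∀ s, ptilde s = -∫ z in (0:ℝ)..s, Ml z / (Ml z + Mg z) * pc' z)
    (hpbar : ∀ s, pbar s = ∫ z in (0:ℝ)..s, Mg z / (Ml z + Mg z) * pc' z)
    (hB : ∀ s, B s = -∫ z in (0:ℝ)..s, Ml z * Mg z / (Ml z + Mg z) * pc' z) :
    ∃ C : ℝ, 0 < C ∧
      ∀ sK ∈ Set.Icc (0:ℝ) 1, ∀ sL ∈ Set.Icc (0:ℝ) 1,
        ∀ plK plL pgK pgL : ℝ,
          pgK - plK = pbar sK - ptilde sK →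
          pgL - plL = pbar sL - ptilde sL →
          (B sL - B sK) ^ 2 ≤
            C * ((if plL - plK ≤ 0 then Ml sK else Ml sL) * (plL - plK) ^ 2
               + (if pgL - pgK ≤ 0 then Mg sK else Mg sL) * (pgL - pgK) ^ 2) := by
  have h0 : (0:ℝ) ∈ Icc (0:ℝ) 1 := left_mem_Icc.2 zero_le_one
  have h1 : (1:ℝ) ∈ Icc (0:ℝ) 1 := right_mem_Icc.2 zero_le_one
  have hM_pos : ∀ s ∈ Icc (0:ℝ) 1, 0 < Ml s + Mg s := fun s hs ↦ hm0.trans_le (hM_lower s hs)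
  refine ⟨Ml 1 + Mg 0, by linarith [hM_pos 1 h1, hMg_anti h0 h1 zero_le_one], ?_⟩
  intro sK hsK sL hsL plK plL pgK pgL hK hL
  change _ ≤ _ * (upwind Ml sK sL (plL - plK) * _ + upwind Mg sK sL (pgL - pgK) * _)
  wlog hKL : sK ≤ sL generalizing sK sL plK plL pgK pgL
  · have h := this sL hsL sK hsK plL plK pgL pgK hL hK (le_of_not_ge hKL)
    rwa [sub_sq_comm, upwind_mul_sq_swap Ml, upwind_mul_sq_swap Mg] at h
  obtain ⟨hB_nonneg, hB_le_l, hB_le_g⟩ := capillary_increment_bounds hpc'_cont hpc'_neg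
    hMl_cont hMg_cont hMl_nonneg hMg_nonneg hMl_mono hMg_anti hM_pos hptilde hpbar hB hsK hsL hKL
  exact sq_le_upwind_sum (hMl_nonneg sK hsK) (hMl_nonneg sL hsL) (hMg_nonneg sK hsK)
    (hMg_nonneg sL hsL) (by linarith [hMl_mono hsL h1 hsL.2, hMg_nonneg 0 h0])
    (by linarith [hMg_anti h0 hsK hsK.1, hMl_nonneg 1 h1]) (by linarith) hB_nonneg hB_le_l hB_le_g

/-- There exists a constant `C > 0`, depending only on `p_c`, `M_l`,
`M_g` and `m0`, such that under the global-pressure framework, for every choice of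
discrete interface data, the difference of the capillary function `B` is controlled
by the upwinded phase-pressure differences:
`(B(s_L) − B(s_K))² ≤ C · ( M_{l,KL}·(δp_l)² + M_{g,KL}·(δp_g)² )`. -/
theorem capillary_term_estimate
    -- global-pressure framework
    (m0 : ℝ) (hm0 : 0 < m0)
    (pc pc' Ml Mg : ℝ → ℝ)
    (hpc_deriv : ∀ s ∈ Set.Icc (0:ℝ) 1, HasDerivWithinAt pc (pc' s) (Set.Icc 0 1) s)
    (hpc'_cont : ContinuousOn pc' (Set.Icc 0 1))
    (hpc'_neg : ∀ s ∈ Set.Icc (0:ℝ) 1, pc' s < 0)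
    (hMl_cont : ContinuousOn Ml (Set.Icc 0 1))
    (hMg_cont : ContinuousOn Mg (Set.Icc 0 1))
    (hMl_nonneg : ∀ s ∈ Set.Icc (0:ℝ) 1, 0 ≤ Ml s)
    (hMg_nonneg : ∀ s ∈ Set.Icc (0:ℝ) 1, 0 ≤ Mg s)
    (hMl_mono : MonotoneOn Ml (Set.Icc 0 1))
    (hMg_anti : AntitoneOn Mg (Set.Icc 0 1))
    (hM_lower : ∀ s ∈ Set.Icc (0:ℝ) 1, m0 ≤ Ml s + Mg s)
    (ptilde pbar B : ℝ → ℝ)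
    (hptilde : ∀ s, ptilde s = -∫ z in (0:ℝ)..s, Ml z / (Ml z + Mg z) * pc' z)
    (hpbar : ∀ s, pbar s = ∫ z in (0:ℝ)..s, Mg z / (Ml z + Mg z) * pc' z)
    (hB : ∀ s, B s = -∫ z in (0:ℝ)..s, Ml z * Mg z / (Ml z + Mg z) * pc' z) :
    ∃ C : ℝ, 0 < C ∧
      ∀ sK ∈ Set.Icc (0:ℝ) 1, ∀ sL ∈ Set.Icc (0:ℝ) 1,
        ∀ plK plL pgK pgL : ℝ,
          pgK - plK = pbar sK - ptilde sK →
          pgL - plL = pbar sL - ptilde sL →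
          (B sL - B sK) ^ 2 ≤
            C * ((if plL - plK ≤ 0 then Ml sK else Ml sL) * (plL - plK) ^ 2
               + (if pgL - pgK ≤ 0 then Mg sK else Mg sL) * (pgL - pgK) ^ 2) :=
  capillary_term_estimate_general m0 hm0 pc' Ml Mg hpc'_cont hpc'_neg hMl_cont hMg_cont hMl_nonneg
    hMg_nonneg hMl_mono hMg_anti hM_lower ptilde pbar B hptilde hpbar hB
end

section
/- There exists a constant C > 0, depending only on p_c, M_l, M_g and m0, such that under the global-pressure framework, for every choice of discrete interface data, the dissipative term associated with p̄ is controlled by the upwinded phase-pressure differences: M_{l,KL} · (p̄(s_L) − p̄(s_K))² ≤ C · ( M_{l,KL} · (δp_l)² + M_{g,KL} · (δp_g)² ). -/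
/-! Over the interval between `s_K` and `s_L`, `a := p̄(s_L) − p̄(s_K) = ∫ (M_g/M) p_c'` and
`d := ∫ p_c' = δp_g − δp_l`. As `0 ≤ M_g/M ≤ 1` and `p_c' < 0`, `|a| ≤ |d|`, so if
`|d| ≤ 2 |δp_l|` then `a² ≤ 4 δp_l²`. Otherwise `δp_g` has the sign of `d` and `|d| ≤ 2 |δp_g|`.
The sign of `d` says which of `s_K`, `s_L` is smaller, and that is exactly the cell the gas
upwinding picks, so `M_{g,KL}` is the largest value of the nonincreasing `M_g` on the interval.
With `c⁻ ≤ -p_c' ≤ c⁺` this gives `m0 |a| ≤ c⁺ M_{g,KL} |s_L − s_K| ≤ (c⁺ / c⁻) M_{g,KL} |d|`,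
hence `c⁻ a² ≤ 4 (c⁺ / m0) M_{g,KL} δp_g²`; finally `M_{l,KL} ≤ M_l(1)`. -/

open Set intervalIntegral MeasureTheory
open scoped Interval

lemma IsCompact.exists_bounds_of_forall_neg {α : Type*} [TopologicalSpace α] {s : Set α}
    (hs : IsCompact s) (hne : s.Nonempty) {g : α → ℝ} (hg : ContinuousOn g s)
    (hneg : ∀ x ∈ s, g x < 0) : ∃ c C : ℝ, 0 < c ∧ ∀ x ∈ s, |g x| ≤ C ∧ g x ≤ -c := by
  obtain ⟨xmax, hxmax, hmax⟩ := hs.exists_isMaxOn hne hg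
  obtain ⟨xmin, -, hmin⟩ := hs.exists_isMinOn hne hg
  refine ⟨-g xmax, -g xmin, by linarith [hneg xmax hxmax], fun x hx => ⟨?_, by simpa using hmax hx⟩⟩
  rw [abs_of_neg (hneg x hx), neg_le_neg_iff]
  exact hmin hx

section IntervalIntegral

variable {f g : ℝ → ℝ} {u v c : ℝ}

lemma abs_integral_le_abs_integral_of_le_of_nonpos (hf : IntervalIntegrable f volume u v)
    (hg : IntervalIntegrable g volume u v) (hgf : ∀ z ∈ uIcc u v, g z ≤ f z)
    (hf0 : ∀ z ∈ uIcc u v, f z ≤ 0) :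
    |∫ z in u..v, f z| ≤ |∫ z in u..v, g z| := by
  wlog huv : u ≤ v generalizing u v
  · rw [integral_symm, integral_symm v, abs_neg, abs_neg]
    exact this hf.symm hg.symm (uIcc_comm u v ▸ hgf) (uIcc_comm u v ▸ hf0) (le_of_not_ge huv)
  rw [uIcc_of_le huv] at hgf hf0
  have hgf' := integral_mono_on huv hg hf hgf
  have hf0' : ∫ z in u..v, f z ≤ 0 := by
    simpa using integral_mono_on huv hf intervalIntegrable_const hf0
  rw [abs_of_nonpos hf0', abs_of_nonpos (hgf'.trans hf0')]
  linarith

lemma integral_le_neg_mul_of_le (huv : u ≤ v) (hg : IntervalIntegrable g volume u v)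
    (hgc : ∀ z ∈ Icc u v, g z ≤ -c) : ∫ z in u..v, g z ≤ -(c * (v - u)) := by
  simpa [mul_comm] using integral_mono_on huv hg intervalIntegrable_const hgc

lemma mul_abs_sub_le_abs_integral (hg : IntervalIntegrable g volume u v)
    (hgc : ∀ z ∈ uIcc u v, g z ≤ -c) : c * |v - u| ≤ |∫ z in u..v, g z| := by
  wlog huv : u ≤ v generalizing u v
  · rw [integral_symm, abs_neg, abs_sub_comm]
    exact this hg.symm (uIcc_comm u v ▸ hgc) (le_of_not_ge huv)
  rw [abs_of_nonneg (sub_nonneg.2 huv)]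
  have := integral_le_neg_mul_of_le huv hg (uIcc_of_le huv ▸ hgc)
  exact (le_neg.1 this).trans (neg_le_abs _)

lemma integral_nonpos_iff_le (hc : 0 < c) (hg : IntervalIntegrable g volume u v)
    (hgc : ∀ z ∈ uIcc u v, g z ≤ -c) : ∫ z in u..v, g z ≤ 0 ↔ u ≤ v := by
  refine ⟨fun hint => le_of_not_gt fun hvu => ?_, fun huv => ?_⟩
  · rw [uIcc_of_ge hvu.le] at hgc
    have := integral_le_neg_mul_of_le hvu.le hg.symm hgc
    rw [integral_symm] at this
    nlinarith
  · have := integral_le_neg_mul_of_le huv hg (uIcc_of_le huv ▸ hgc)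
    nlinarith

lemma ContinuousOn.intervalIntegrable_of_mem_Icc_s3 {h : ℝ → ℝ} {a b u v : ℝ}
    (hh : ContinuousOn h (Icc a b)) (hu : u ∈ Icc a b) (hv : v ∈ Icc a b) :
    IntervalIntegrable h volume u v :=
  (hh.mono (uIcc_subset_Icc hu hv)).intervalIntegrable

lemma sub_eq_integral_of_eq_integral {F h : ℝ → ℝ} {a b u v : ℝ}
    (hF : ∀ s ∈ Icc a b, F s = ∫ z in a..s, h z) (hh : ContinuousOn h (Icc a b))
    (hu : u ∈ Icc a b) (hv : v ∈ Icc a b) : F v - F u = ∫ z in u..v, h z := by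
  have ha : a ∈ Icc a b := left_mem_Icc.2 (hu.1.trans hu.2)
  rw [hF v hv, hF u hu, integral_interval_sub_left (hh.intervalIntegrable_of_mem_Icc_s3 ha hv)
    (hh.intervalIntegrable_of_mem_Icc_s3 ha hu)]

lemma integral_fraction_mul_add_integral_fraction_mul {a b h : ℝ → ℝ} {u v : ℝ}
    (hab : ∀ z ∈ uIcc u v, a z + b z ≠ 0)
    (hb : IntervalIntegrable (fun z => b z / (a z + b z) * h z) volume u v)
    (ha : IntervalIntegrable (fun z => a z / (a z + b z) * h z) volume u v) :
    (∫ z in u..v, b z / (a z + b z) * h z) + (∫ z in u..v, a z / (a z + b z) * h z) =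
      ∫ z in u..v, h z := by
  rw [← integral_add hb ha]
  refine integral_congr fun z hz => ?_
  have := hab z hz
  field_simp
  ring

end IntervalIntegral

lemma mul_sq_le_of_abs_le {a d h c K : ℝ} (hc : 0 ≤ c) (hK : 0 ≤ K) (had : |a| ≤ |d|)
    (hah : |a| ≤ K * h) (hhd : c * h ≤ |d|) : c * a ^ 2 ≤ K * d ^ 2 := by
  have hca : c * |a| ≤ K * |d| := by nlinarith
  calc c * a ^ 2 = c * |a| * |a| := by rw [mul_assoc, abs_mul_abs_self, sq]
    _ ≤ K * |d| * |d| := mul_le_mul hca had (abs_nonneg a) (by positivity)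
    _ = K * d ^ 2 := by rw [mul_assoc, abs_mul_abs_self, sq]

lemma mul_sq_integral_le {f g : ℝ → ℝ} {u v c K : ℝ} (hc : 0 ≤ c) (hK : 0 ≤ K)
    (hfg : |∫ z in u..v, f z| ≤ |∫ z in u..v, g z|) (hf : ∀ z ∈ Ι u v, |f z| ≤ K)
    (hg : IntervalIntegrable g volume u v) (hgc : ∀ z ∈ uIcc u v, g z ≤ -c) :
    c * (∫ z in u..v, f z) ^ 2 ≤ K * (∫ z in u..v, g z) ^ 2 :=
  mul_sq_le_of_abs_le hc hK hfg
    (by simpa using intervalIntegral.norm_integral_le_of_norm_le_const (f := f) hf)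
    (mul_abs_sub_le_abs_integral hg hgc)

lemma abs_le_two_mul_abs_and_nonpos_iff {d dl dg : ℝ} (hd : dg - dl = d) (h : 2 * |dl| < |d|) :
    |d| ≤ 2 * |dg| ∧ (dg ≤ 0 ↔ d ≤ 0) := by
  refine ⟨?_, ⟨fun _ => ?_, fun _ => ?_⟩⟩ <;>
    rcases abs_cases d with ⟨_, _⟩ | ⟨_, _⟩ <;> rcases abs_cases dl with ⟨_, _⟩ | ⟨_, _⟩ <;>
    rcases abs_cases dg with ⟨_, _⟩ | ⟨_, _⟩ <;> linarith

lemma mul_sq_le_of_regimes {a d dl dg ML MG Mt c K : ℝ} (hd : dg - dl = d) (had : |a| ≤ |d|)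
    (hcap : 2 * |dl| < |d| → c * a ^ 2 ≤ K * MG * d ^ 2)
    (hc : 0 < c) (hK : 0 ≤ K) (hML : 0 ≤ ML) (hMLt : ML ≤ Mt) (hMG : 0 ≤ MG) :
    ML * a ^ 2 ≤ (4 + 4 * Mt * K / c) * (ML * dl ^ 2 + MG * dg ^ 2) := by
  have hMt : 0 ≤ Mt := hML.trans hMLt
  have hliq : 0 ≤ ML * dl ^ 2 := by positivity
  have hgas : 0 ≤ MG * dg ^ 2 := by positivity
  have hrest : 0 ≤ 4 * Mt * K / c := by positivity
  by_cases hcase : 2 * |dl| < |d|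
  · have hdg : d ^ 2 ≤ 4 * dg ^ 2 := by
      have := (abs_le_two_mul_abs_and_nonpos_iff hd hcase).1
      nlinarith [sq_abs d, sq_abs dg, abs_nonneg d]
    have hca : c * a ^ 2 ≤ 4 * K * (MG * dg ^ 2) := by
      nlinarith [hcap hcase, mul_le_mul_of_nonneg_left hdg (mul_nonneg hK hMG)]
    have : a ^ 2 ≤ 4 * K / c * (MG * dg ^ 2) := by
      rw [div_mul_eq_mul_div, le_div_iff₀ hc]; linarith
    calc ML * a ^ 2 ≤ Mt * (4 * K / c * (MG * dg ^ 2)) :=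
          mul_le_mul hMLt this (sq_nonneg a) hMt
      _ = 4 * Mt * K / c * (MG * dg ^ 2) := by ring
      _ ≤ _ := by nlinarith
  · have : a ^ 2 ≤ 4 * dl ^ 2 := by
      nlinarith [sq_abs d, sq_abs dl, sq_abs a, abs_nonneg a, abs_nonneg dl]
    nlinarith [mul_le_mul_of_nonneg_left this hML]

lemma div_add_mul_mem_Icc {a b x : ℝ} (ha : 0 ≤ a) (hb : 0 ≤ b) (hab : 0 < a + b) (hx : x ≤ 0) :
    b / (a + b) * x ∈ Icc x 0 := by
  have h1 : b / (a + b) ≤ 1 := (div_le_one hab).2 (by linarith)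
  exact ⟨by nlinarith, mul_nonpos_of_nonneg_of_nonpos (by positivity) hx⟩

lemma abs_div_add_mul_le {a b x m G C : ℝ} (hm : 0 < m) (hab : m ≤ a + b) (ha : 0 ≤ a)
    (hb : 0 ≤ b) (hbG : b ≤ G) (hx : |x| ≤ C) : |b / (a + b) * x| ≤ C / m * G := by
  rw [abs_mul, abs_of_nonneg (by positivity : 0 ≤ b / (a + b)), mul_comm]
  have hC : 0 ≤ C := (abs_nonneg x).trans hx
  exact (mul_le_mul hx (div_le_div₀ (hb.trans hbG) hbG hm hab) (by positivity) hC).trans_eq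
    (by ring)

section Fraction

variable {Ml Mg p : ℝ → ℝ} {S : Set ℝ} {u v : ℝ}

lemma abs_integral_fraction_mul_le (hS : uIcc u v ⊆ S)
    (hf : IntervalIntegrable (fun z => Mg z / (Ml z + Mg z) * p z) volume u v)
    (hp : IntervalIntegrable p volume u v) (hMl : ∀ z ∈ S, 0 ≤ Ml z) (hMg : ∀ z ∈ S, 0 ≤ Mg z)
    (hM : ∀ z ∈ S, 0 < Ml z + Mg z) (hp0 : ∀ z ∈ S, p z ≤ 0) :
    |∫ z in u..v, Mg z / (Ml z + Mg z) * p z| ≤ |∫ z in u..v, p z| := by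
  have hfrac (z) (hz : z ∈ uIcc u v) :=
    div_add_mul_mem_Icc (hMl z (hS hz)) (hMg z (hS hz)) (hM z (hS hz)) (hp0 z (hS hz))
  exact abs_integral_le_abs_integral_of_le_of_nonpos hf hp (fun z hz => (hfrac z hz).1)
    fun z hz => (hfrac z hz).2

lemma mul_sq_integral_fraction_mul_le {m0 c C G : ℝ} (hS : uIcc u v ⊆ S)
    (hp : IntervalIntegrable p volume u v) (hm0 : 0 < m0) (hc : 0 ≤ c) (hMl : ∀ z ∈ S, 0 ≤ Ml z)
    (hMg : ∀ z ∈ S, 0 ≤ Mg z) (hM : ∀ z ∈ S, m0 ≤ Ml z + Mg z) (hG : ∀ z ∈ uIcc u v, Mg z ≤ G)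
    (hpb : ∀ z ∈ S, |p z| ≤ C ∧ p z ≤ -c)
    (hfp : |∫ z in u..v, Mg z / (Ml z + Mg z) * p z| ≤ |∫ z in u..v, p z|) :
    c * (∫ z in u..v, Mg z / (Ml z + Mg z) * p z) ^ 2 ≤ C / m0 * G * (∫ z in u..v, p z) ^ 2 := by
  have hu : u ∈ uIcc u v := left_mem_uIcc
  have hC : 0 ≤ C := (abs_nonneg _).trans (hpb u (hS hu)).1
  have hG0 : 0 ≤ G := (hMg u (hS hu)).trans (hG u hu)
  refine mul_sq_integral_le hc (by positivity) hfp (fun z hz => ?_) hp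
    fun z hz => (hpb z (hS hz)).2
  have hz' := uIoc_subset_uIcc hz
  exact abs_div_add_mul_le hm0 (hM z (hS hz')) (hMl z (hS hz')) (hMg z (hS hz')) (hG z hz')
    (hpb z (hS hz')).1

end Fraction

lemma le_upwind_of_antitoneOn {M : ℝ → ℝ} {a b sK sL δ : ℝ} (hM : AntitoneOn M (Icc a b))
    (hsK : sK ∈ Icc a b) (hsL : sL ∈ Icc a b) (hdir : δ ≤ 0 ↔ sK ≤ sL) :
    ∀ z ∈ uIcc sK sL, M z ≤ if δ ≤ 0 then M sK else M sL := by
  intro z hz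
  have hzab := uIcc_subset_Icc hsK hsL hz
  split_ifs with hδ
  · rw [uIcc_of_le (hdir.1 hδ)] at hz
    exact hM hsK hzab hz.1
  · rw [uIcc_of_ge (le_of_not_ge (mt hdir.2 hδ))] at hz
    exact hM hsL hzab hz.1

theorem dissipative_term_pbar_estimate_general
    -- global-pressure framework
    (m0 : ℝ) (hm0 : 0 < m0)
    (pc' Ml Mg : ℝ → ℝ)
    (hpc'_cont : ContinuousOn pc' (Set.Icc 0 1))
    (hpc'_neg : ∀ s ∈ Set.Icc (0:ℝ) 1, pc' s < 0)
    (hMl_cont : ContinuousOn Ml (Set.Icc 0 1))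
    (hMg_cont : ContinuousOn Mg (Set.Icc 0 1))
    (hMl_nonneg : ∀ s ∈ Set.Icc (0:ℝ) 1, 0 ≤ Ml s)
    (hMg_nonneg : ∀ s ∈ Set.Icc (0:ℝ) 1, 0 ≤ Mg s)
    (hMl_mono : MonotoneOn Ml (Set.Icc 0 1))
    (hMg_anti : AntitoneOn Mg (Set.Icc 0 1))
    (hM_lower : ∀ s ∈ Set.Icc (0:ℝ) 1, m0 ≤ Ml s + Mg s)
    (ptilde pbar : ℝ → ℝ)
    (hptilde : ∀ s, ptilde s = -∫ z in (0:ℝ)..s, Ml z / (Ml z + Mg z) * pc' z)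
    (hpbar : ∀ s, pbar s = ∫ z in (0:ℝ)..s, Mg z / (Ml z + Mg z) * pc' z) :
    ∃ C : ℝ, 0 < C ∧
      ∀ sK ∈ Set.Icc (0:ℝ) 1, ∀ sL ∈ Set.Icc (0:ℝ) 1,
        ∀ plK plL pgK pgL : ℝ,
          pgK - plK = pbar sK - ptilde sK →
          pgL - plL = pbar sL - ptilde sL →
          (if plL - plK ≤ 0 then Ml sK else Ml sL) * (pbar sL - pbar sK) ^ 2 ≤
            C * ((if plL - plK ≤ 0 then Ml sK else Ml sL) * (plL - plK) ^ 2
               + (if pgL - pgK ≤ 0 then Mg sK else Mg sL) * (pgL - pgK) ^ 2) := by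
  have h0 : (0:ℝ) ∈ Icc 0 1 := left_mem_Icc.2 zero_le_one
  have h1 : (1:ℝ) ∈ Icc 0 1 := right_mem_Icc.2 zero_le_one
  obtain ⟨cm, cp, hcm, hpc'_bounds⟩ :=
    isCompact_Icc.exists_bounds_of_forall_neg ⟨0, h0⟩ hpc'_cont hpc'_neg
  have hcp : 0 < cp := by linarith [neg_le_abs (pc' 0), hpc'_bounds 0 h0]
  have hMl1 := hMl_nonneg 1 h1
  refine ⟨4 + 4 * Ml 1 * (cp / m0) / cm, by positivity, ?_⟩
  intro sK hsK sL hsL plK plL pgK pgL hK hL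
  have hsub := uIcc_subset_Icc hsK hsL
  have hM (z) (hz : z ∈ Icc (0:ℝ) 1) : 0 < Ml z + Mg z := hm0.trans_le (hM_lower z hz)
  have hfg : ContinuousOn (fun z => Mg z / (Ml z + Mg z) * pc' z) (Icc 0 1) :=
    (hMg_cont.div (hMl_cont.add hMg_cont) fun z hz => (hM z hz).ne').mul hpc'_cont
  have hfl : ContinuousOn (fun z => Ml z / (Ml z + Mg z) * pc' z) (Icc 0 1) :=
    (hMl_cont.div (hMl_cont.add hMg_cont) fun z hz => (hM z hz).ne').mul hpc'_cont
  have hpi := hpc'_cont.intervalIntegrable_of_mem_Icc_s3 hsK hsL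
  have hd : (pgL - pgK) - (plL - plK) = ∫ z in sK..sL, pc' z := by
    rw [← sub_eq_integral_of_eq_integral (F := fun s => pbar s - ptilde s) (fun s hs => ?_)
      hpc'_cont hsK hsL]
    · linarith
    rw [hpbar, hptilde, sub_neg_eq_add, integral_fraction_mul_add_integral_fraction_mul
      (fun z hz => (hM z (uIcc_subset_Icc h0 hs hz)).ne') (hfg.intervalIntegrable_of_mem_Icc_s3 h0 hs)
      (hfl.intervalIntegrable_of_mem_Icc_s3 h0 hs)]
  have had := abs_integral_fraction_mul_le hsub (hfg.intervalIntegrable_of_mem_Icc_s3 hsK hsL) hpi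
    hMl_nonneg hMg_nonneg hM fun z hz => (hpc'_neg z hz).le
  have hMgKL : 0 ≤ if pgL - pgK ≤ 0 then Mg sK else Mg sL := by
    split_ifs <;> apply hMg_nonneg <;> assumption
  rw [sub_eq_integral_of_eq_integral (fun s _ => hpbar s) hfg hsK hsL]
  refine mul_sq_le_of_regimes hd had (fun hcap => ?_) hcm (by positivity)
    (by split_ifs <;> apply hMl_nonneg <;> assumption)
    (by split_ifs <;> apply hMl_mono ‹_› h1 (‹_ ∈ Icc (0:ℝ) 1›.2)) hMgKL
  -- once `δp_g` has the sign of `∫ pc'`, upwinding selects the left end of `[[sK, sL]]`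
  have hdir := (abs_le_two_mul_abs_and_nonpos_iff hd hcap).2.trans
    (integral_nonpos_iff_le hcm hpi fun z hz => (hpc'_bounds z (hsub hz)).2)
  exact mul_sq_integral_fraction_mul_le hsub hpi hm0 hcm.le hMl_nonneg hMg_nonneg hM_lower
    (le_upwind_of_antitoneOn hMg_anti hsK hsL hdir) hpc'_bounds had

/-- There exists a constant `C > 0`, depending only on `p_c`, `M_l`,
`M_g` and `m0`, such that under the global-pressure framework, for every choice of
discrete interface data, the dissipative term associated with `p̄` is controlled by
the upwinded phase-pressure differences:
`M_{l,KL}·(p̄(s_L) − p̄(s_K))² ≤ C · ( M_{l,KL}·(δp_l)² + M_{g,KL}·(δp_g)² )`. -/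
theorem dissipative_term_pbar_estimate
    -- global-pressure framework
    (m0 : ℝ) (hm0 : 0 < m0)
    (pc pc' Ml Mg : ℝ → ℝ)
    (hpc_deriv : ∀ s ∈ Set.Icc (0:ℝ) 1, HasDerivWithinAt pc (pc' s) (Set.Icc 0 1) s)
    (hpc'_cont : ContinuousOn pc' (Set.Icc 0 1))
    (hpc'_neg : ∀ s ∈ Set.Icc (0:ℝ) 1, pc' s < 0)
    (hMl_cont : ContinuousOn Ml (Set.Icc 0 1))
    (hMg_cont : ContinuousOn Mg (Set.Icc 0 1))
    (hMl_nonneg : ∀ s ∈ Set.Icc (0:ℝ) 1, 0 ≤ Ml s)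
    (hMg_nonneg : ∀ s ∈ Set.Icc (0:ℝ) 1, 0 ≤ Mg s)
    (hMl_mono : MonotoneOn Ml (Set.Icc 0 1))
    (hMg_anti : AntitoneOn Mg (Set.Icc 0 1))
    (hM_lower : ∀ s ∈ Set.Icc (0:ℝ) 1, m0 ≤ Ml s + Mg s)
    (ptilde pbar B : ℝ → ℝ)
    (hptilde : ∀ s, ptilde s = -∫ z in (0:ℝ)..s, Ml z / (Ml z + Mg z) * pc' z)
    (hpbar : ∀ s, pbar s = ∫ z in (0:ℝ)..s, Mg z / (Ml z + Mg z) * pc' z)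
    (hB : ∀ s, B s = -∫ z in (0:ℝ)..s, Ml z * Mg z / (Ml z + Mg z) * pc' z) :
    ∃ C : ℝ, 0 < C ∧
      ∀ sK ∈ Set.Icc (0:ℝ) 1, ∀ sL ∈ Set.Icc (0:ℝ) 1,
        ∀ plK plL pgK pgL : ℝ,
          pgK - plK = pbar sK - ptilde sK →
          pgL - plL = pbar sL - ptilde sL →
          (if plL - plK ≤ 0 then Ml sK else Ml sL) * (pbar sL - pbar sK) ^ 2 ≤
            C * ((if plL - plK ≤ 0 then Ml sK else Ml sL) * (plL - plK) ^ 2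
               + (if pgL - pgK ≤ 0 then Mg sK else Mg sL) * (pgL - pgK) ^ 2) :=
  dissipative_term_pbar_estimate_general m0 hm0 pc' Ml Mg hpc'_cont hpc'_neg hMl_cont hMg_cont
    hMl_nonneg hMg_nonneg hMl_mono hMg_anti hM_lower ptilde pbar hptilde hpbar
end

section
/- There exists a constant C > 0, depending only on p_c, M_l, M_g and m0, such that under the global-pressure framework, for every choice of discrete interface data, the dissipative term associated with p̃ is controlled by the upwinded phase-pressure differences: M_{g,KL} · (p̃(s_L) − p̃(s_K))² ≤ C · ( M_{l,KL} · (δp_l)² + M_{g,KL} · (δp_g)² ). -/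
/-!
For `s_K ≤ s_L` put `t = p̃(s_L) − p̃(s_K)` and `r = p̄(s_K) − p̄(s_L)`. Both are nonnegative, and
`t + r = ∫_{s_K}^{s_L} (−p_c')` because the weights `M_l/M` and `M_g/M` add up to one. The two
phase pressures define the same global pressure, so `δp_l = δp_g + t + r`.

If `t ≤ 2|δp_g|`, the gas term alone controls `M_{g,KL} t²`. Otherwise `δp_l ≥ t/2 + r > 0`, so
the liquid mobility is upwinded from `s_L`. Since `M_l(z)/M(z) ≤ M_l(s_L)/m0` on `[s_K, s_L]`,
`m0 t ≤ M_l(s_L) (t + r) ≤ 2 M_l(s_L) δp_l`, and together with `t ≤ 2 δp_l` this gives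
`m0 t² ≤ 4 M_l(s_L) δp_l²`; finally `M_{g,KL} ≤ M_g(0)`. The case `s_L ≤ s_K` is the mirror image.
-/

open MeasureTheory Set

lemma mul_sq_le_four_mul_sq {m0 ml t r x : ℝ} (hml : 0 ≤ ml) (ht : 0 ≤ t) (hr : 0 ≤ r)
    (htr : m0 * t ≤ ml * (t + r)) (hx : t / 2 + r ≤ x) :
    m0 * t ^ 2 ≤ 4 * ml * x ^ 2 := by
  have htx : t ≤ 2 * x := by linarith
  have hmlx : m0 * t ≤ ml * (2 * x) :=
    htr.trans (mul_le_mul_of_nonneg_left (by linarith) hml)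
  calc m0 * t ^ 2 = t * (m0 * t) := by ring
    _ ≤ t * (ml * (2 * x)) := mul_le_mul_of_nonneg_left hmlx ht
    _ ≤ 2 * x * (ml * (2 * x)) :=
        mul_le_mul_of_nonneg_right htx (mul_nonneg hml (by linarith))
    _ = 4 * ml * x ^ 2 := by ring

/-- `x`, `y` are the liquid and gas pressure jumps and `t`, `r` the jumps of `p̃` and `−p̄`;
`mlUp` is the upwinded liquid mobility, known only to equal `ml` when `x > 0`. -/
lemma mul_sq_le_of_upwind {m0 Mx ml mlUp mg t r x y : ℝ} (hm0 : 0 < m0) (hml : 0 ≤ ml)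
    (hmg : 0 ≤ mg) (hmgMx : mg ≤ Mx) (hmlUp : 0 ≤ mlUp) (hmlUp_pos : 0 < x → mlUp = ml)
    (ht : 0 ≤ t) (hr : 0 ≤ r) (htr : m0 * t ≤ ml * (t + r)) (hxy : x = y + t + r) :
    mg * t ^ 2 ≤ (4 + 4 * Mx / m0) * (mlUp * x ^ 2 + mg * y ^ 2) := by
  have hq : 0 ≤ Mx / m0 := div_nonneg (hmg.trans hmgMx) hm0.le
  rcases le_or_gt t (2 * |y|) with hsmall | hlarge
  · have hty : t ^ 2 ≤ 4 * y ^ 2 := by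
      nlinarith [sq_abs y, abs_nonneg y]
    rw [mul_div_assoc]
    nlinarith [mul_nonneg hmlUp (sq_nonneg x), mul_nonneg hmg (sq_nonneg y),
      mul_nonneg hq (mul_nonneg hmg (sq_nonneg y)), mul_nonneg hq (mul_nonneg hmlUp (sq_nonneg x))]
  · have hx : t / 2 + r ≤ x := by linarith [neg_abs_le y]
    rw [hmlUp_pos (by linarith [abs_nonneg y])]
    calc mg * t ^ 2 ≤ Mx / m0 * (m0 * t ^ 2) := by
          rw [div_mul_eq_mul_div, mul_div_assoc, mul_div_cancel_left₀ _ hm0.ne']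
          exact mul_le_mul_of_nonneg_right hmgMx (sq_nonneg t)
      _ ≤ Mx / m0 * (4 * ml * x ^ 2) :=
          mul_le_mul_of_nonneg_left (mul_sq_le_four_mul_sq hml ht hr htr hx) hq
      _ ≤ (4 + 4 * Mx / m0) * (ml * x ^ 2 + mg * y ^ 2) := by
          rw [mul_div_assoc]
          nlinarith [mul_nonneg hml (sq_nonneg x), mul_nonneg hmg (sq_nonneg y),
            mul_nonneg hq (mul_nonneg hmg (sq_nonneg y))]

lemma sub_eq_intervalIntegral_of_eq {F f : ℝ → ℝ} {a b : ℝ}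
    (hF : ∀ s, F s = ∫ z in (0 : ℝ)..s, f z) (hf : ContinuousOn f (Icc 0 1))
    (ha : a ∈ Icc (0 : ℝ) 1) (hb : b ∈ Icc (0 : ℝ) 1) :
    F b - F a = ∫ z in a..b, f z := by
  have h0 : (0 : ℝ) ∈ Icc (0 : ℝ) 1 := ⟨le_rfl, zero_le_one⟩
  rw [hF, hF]
  exact intervalIntegral.integral_interval_sub_left
    (hf.mono (uIcc_subset_Icc h0 hb)).intervalIntegrable
    (hf.mono (uIcc_subset_Icc h0 ha)).intervalIntegrable

structure GlobalPressureFramework (m0 : ℝ) (pc' Ml Mg : ℝ → ℝ) : Prop where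
  m0_pos : 0 < m0
  pc'_cont : ContinuousOn pc' (Icc 0 1)
  pc'_neg : ∀ s ∈ Icc (0 : ℝ) 1, pc' s < 0
  Ml_cont : ContinuousOn Ml (Icc 0 1)
  Mg_cont : ContinuousOn Mg (Icc 0 1)
  Ml_nonneg : ∀ s ∈ Icc (0 : ℝ) 1, 0 ≤ Ml s
  Mg_nonneg : ∀ s ∈ Icc (0 : ℝ) 1, 0 ≤ Mg s
  Ml_mono : MonotoneOn Ml (Icc 0 1)
  Mg_anti : AntitoneOn Mg (Icc 0 1)
  M_lower : ∀ s ∈ Icc (0 : ℝ) 1, m0 ≤ Ml s + Mg s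

namespace GlobalPressureFramework

variable {m0 a b : ℝ} {pc' Ml Mg f g ptilde pbar : ℝ → ℝ}

lemma total_pos (h : GlobalPressureFramework m0 pc' Ml Mg) {z : ℝ} (hz : z ∈ Icc (0 : ℝ) 1) :
    0 < Ml z + Mg z :=
  h.m0_pos.trans_le (h.M_lower z hz)

lemma continuousOn_div_mul (h : GlobalPressureFramework m0 pc' Ml Mg)
    (hf : ContinuousOn f (Icc 0 1)) (hg : ContinuousOn g (Icc 0 1)) :
    ContinuousOn (fun z => f z / (Ml z + Mg z) * g z) (Icc 0 1) :=
  (hf.div (h.Ml_cont.add h.Mg_cont) fun _ hz => (h.total_pos hz).ne').mul hg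

lemma intervalIntegrable_div_mul_neg (h : GlobalPressureFramework m0 pc' Ml Mg)
    (hf : ContinuousOn f (Icc 0 1)) (ha : a ∈ Icc (0 : ℝ) 1) (hb : b ∈ Icc (0 : ℝ) 1) :
    IntervalIntegrable (fun z => f z / (Ml z + Mg z) * -pc' z) volume a b :=
  ((h.continuousOn_div_mul (g := fun z => -pc' z) hf h.pc'_cont.neg).mono
    (uIcc_subset_Icc ha hb)).intervalIntegrable

lemma ptilde_sub_eq (h : GlobalPressureFramework m0 pc' Ml Mg)
    (hptilde : ∀ s, ptilde s = -∫ z in (0 : ℝ)..s, Ml z / (Ml z + Mg z) * pc' z)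
    (ha : a ∈ Icc (0 : ℝ) 1) (hb : b ∈ Icc (0 : ℝ) 1) :
    ptilde b - ptilde a = ∫ z in a..b, Ml z / (Ml z + Mg z) * -pc' z := by
  have := sub_eq_intervalIntegral_of_eq (F := fun s => -ptilde s)
    (fun s => by rw [hptilde, neg_neg]) (h.continuousOn_div_mul h.Ml_cont h.pc'_cont) ha hb
  simp only [mul_neg, intervalIntegral.integral_neg]
  linarith

lemma pbar_sub_eq (h : GlobalPressureFramework m0 pc' Ml Mg)
    (hpbar : ∀ s, pbar s = ∫ z in (0 : ℝ)..s, Mg z / (Ml z + Mg z) * pc' z)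
    (ha : a ∈ Icc (0 : ℝ) 1) (hb : b ∈ Icc (0 : ℝ) 1) :
    pbar a - pbar b = ∫ z in a..b, Mg z / (Ml z + Mg z) * -pc' z := by
  have := sub_eq_intervalIntegral_of_eq hpbar
    (h.continuousOn_div_mul h.Mg_cont h.pc'_cont) ha hb
  simp only [mul_neg, intervalIntegral.integral_neg]
  linarith

lemma integral_div_mul_neg_nonneg (h : GlobalPressureFramework m0 pc' Ml Mg)
    (hf : ∀ z ∈ Icc (0 : ℝ) 1, 0 ≤ f z) (ha : a ∈ Icc (0 : ℝ) 1) (hb : b ∈ Icc (0 : ℝ) 1)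
    (hab : a ≤ b) :
    0 ≤ ∫ z in a..b, f z / (Ml z + Mg z) * -pc' z := by
  refine intervalIntegral.integral_nonneg hab fun z hz => ?_
  have hz01 : z ∈ Icc (0 : ℝ) 1 := Icc_subset_Icc ha.1 hb.2 hz
  exact mul_nonneg (div_nonneg (hf z hz01) (h.total_pos hz01).le)
    (neg_nonneg.2 (h.pc'_neg z hz01).le)

lemma integral_div_mul_add_integral_div_mul (h : GlobalPressureFramework m0 pc' Ml Mg)
    (ha : a ∈ Icc (0 : ℝ) 1) (hb : b ∈ Icc (0 : ℝ) 1) :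
    (∫ z in a..b, Ml z / (Ml z + Mg z) * -pc' z) + ∫ z in a..b, Mg z / (Ml z + Mg z) * -pc' z
      = ∫ z in a..b, -pc' z := by
  rw [← intervalIntegral.integral_add (h.intervalIntegrable_div_mul_neg h.Ml_cont ha hb)
    (h.intervalIntegrable_div_mul_neg h.Mg_cont ha hb)]
  refine intervalIntegral.integral_congr fun z hz => ?_
  have hM := (h.total_pos (uIcc_subset_Icc ha hb hz)).ne'
  simp only [← add_mul, ← add_div, div_self hM, one_mul]

lemma mul_integral_div_mul_neg_le (h : GlobalPressureFramework m0 pc' Ml Mg)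
    (ha : a ∈ Icc (0 : ℝ) 1) (hb : b ∈ Icc (0 : ℝ) 1) (hab : a ≤ b) :
    m0 * ∫ z in a..b, Ml z / (Ml z + Mg z) * -pc' z ≤ Ml b * ∫ z in a..b, -pc' z := by
  rw [← intervalIntegral.integral_const_mul, ← intervalIntegral.integral_const_mul]
  refine intervalIntegral.integral_mono_on hab
    ((h.intervalIntegrable_div_mul_neg h.Ml_cont ha hb).const_mul m0)
    ((h.pc'_cont.neg.mono (uIcc_subset_Icc ha hb)).intervalIntegrable.const_mul _)
    fun z hz => ?_
  have hz01 : z ∈ Icc (0 : ℝ) 1 := Icc_subset_Icc ha.1 hb.2 hz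
  have hM := h.total_pos hz01
  have hfrac : m0 * (Ml z / (Ml z + Mg z)) ≤ Ml b := by
    rw [mul_div_assoc', div_le_iff₀ hM]
    nlinarith [h.M_lower z hz01, h.Ml_nonneg z hz01, h.Ml_mono hz01 hb hz.2]
  rw [← mul_assoc]
  exact mul_le_mul_of_nonneg_right hfrac (neg_nonneg.2 (h.pc'_neg z hz01).le)

lemma jump_bounds (h : GlobalPressureFramework m0 pc' Ml Mg)
    (hptilde : ∀ s, ptilde s = -∫ z in (0 : ℝ)..s, Ml z / (Ml z + Mg z) * pc' z)
    (hpbar : ∀ s, pbar s = ∫ z in (0 : ℝ)..s, Mg z / (Ml z + Mg z) * pc' z)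
    (ha : a ∈ Icc (0 : ℝ) 1) (hb : b ∈ Icc (0 : ℝ) 1) (hab : a ≤ b) :
    0 ≤ ptilde b - ptilde a ∧ 0 ≤ pbar a - pbar b ∧
      m0 * (ptilde b - ptilde a) ≤ Ml b * (ptilde b - ptilde a + (pbar a - pbar b)) := by
  rw [h.ptilde_sub_eq hptilde ha hb, h.pbar_sub_eq hpbar ha hb,
    h.integral_div_mul_add_integral_div_mul ha hb]
  exact ⟨h.integral_div_mul_neg_nonneg h.Ml_nonneg ha hb hab,
    h.integral_div_mul_neg_nonneg h.Mg_nonneg ha hb hab, h.mul_integral_div_mul_neg_le ha hb hab⟩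

end GlobalPressureFramework

theorem dissipative_term_ptilde_estimate_general
    -- global-pressure framework
    (m0 : ℝ) (hm0 : 0 < m0)
    (pc' Ml Mg : ℝ → ℝ)
    (hpc'_cont : ContinuousOn pc' (Set.Icc 0 1))
    (hpc'_neg : ∀ s ∈ Set.Icc (0:ℝ) 1, pc' s < 0)
    (hMl_cont : ContinuousOn Ml (Set.Icc 0 1))
    (hMg_cont : ContinuousOn Mg (Set.Icc 0 1))
    (hMl_nonneg : ∀ s ∈ Set.Icc (0:ℝ) 1, 0 ≤ Ml s)
    (hMg_nonneg : ∀ s ∈ Set.Icc (0:ℝ) 1, 0 ≤ Mg s)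
    (hMl_mono : MonotoneOn Ml (Set.Icc 0 1))
    (hMg_anti : AntitoneOn Mg (Set.Icc 0 1))
    (hM_lower : ∀ s ∈ Set.Icc (0:ℝ) 1, m0 ≤ Ml s + Mg s)
    (ptilde pbar : ℝ → ℝ)
    (hptilde : ∀ s, ptilde s = -∫ z in (0:ℝ)..s, Ml z / (Ml z + Mg z) * pc' z)
    (hpbar : ∀ s, pbar s = ∫ z in (0:ℝ)..s, Mg z / (Ml z + Mg z) * pc' z) :
    ∃ C : ℝ, 0 < C ∧
      ∀ sK ∈ Set.Icc (0:ℝ) 1, ∀ sL ∈ Set.Icc (0:ℝ) 1,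
        ∀ plK plL pgK pgL : ℝ,
          pgK - plK = pbar sK - ptilde sK →
          pgL - plL = pbar sL - ptilde sL →
          (if pgL - pgK ≤ 0 then Mg sK else Mg sL) * (ptilde sL - ptilde sK) ^ 2 ≤
            C * ((if plL - plK ≤ 0 then Ml sK else Ml sL) * (plL - plK) ^ 2
               + (if pgL - pgK ≤ 0 then Mg sK else Mg sL) * (pgL - pgK) ^ 2) := by
  have h : GlobalPressureFramework m0 pc' Ml Mg := ⟨hm0, hpc'_cont, hpc'_neg, hMl_cont, hMg_cont,
    hMl_nonneg, hMg_nonneg, hMl_mono, hMg_anti, hM_lower⟩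
  have h0 : (0 : ℝ) ∈ Set.Icc (0 : ℝ) 1 := ⟨le_rfl, zero_le_one⟩
  refine ⟨4 + 4 * Mg 0 / m0, by have := hMg_nonneg 0 h0; positivity, ?_⟩
  intro sK hsK sL hsL plK plL pgK pgL hK hL
  have hMg_up : 0 ≤ (if pgL - pgK ≤ 0 then Mg sK else Mg sL) ∧
      (if pgL - pgK ≤ 0 then Mg sK else Mg sL) ≤ Mg 0 := by
    split_ifs
    exacts [⟨hMg_nonneg sK hsK, hMg_anti h0 hsK hsK.1⟩, ⟨hMg_nonneg sL hsL, hMg_anti h0 hsL hsL.1⟩]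
  have hMl_up : 0 ≤ (if plL - plK ≤ 0 then Ml sK else Ml sL) := by
    split_ifs
    exacts [hMl_nonneg sK hsK, hMl_nonneg sL hsL]
  rcases le_total sK sL with hKL | hLK
  · obtain ⟨ht, hr, htr⟩ := h.jump_bounds hptilde hpbar hsK hsL hKL
    exact mul_sq_le_of_upwind hm0 (hMl_nonneg sL hsL) hMg_up.1 hMg_up.2 hMl_up
      (fun hx => if_neg hx.not_ge) ht hr htr (by linarith)
  · obtain ⟨ht, hr, htr⟩ := h.jump_bounds hptilde hpbar hsL hsK hLK
    have := mul_sq_le_of_upwind (x := -(plL - plK)) (y := -(pgL - pgK)) hm0 (hMl_nonneg sK hsK)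
      hMg_up.1 hMg_up.2 hMl_up (fun hx => if_pos (by linarith)) ht hr htr (by linarith)
    rwa [neg_sq, neg_sq, sub_sq_comm] at this

/-- There exists a constant `C > 0`, depending only on `p_c`, `M_l`,
`M_g` and `m0`, such that under the global-pressure framework, for every choice of
discrete interface data, the dissipative term associated with `p̃` is controlled by
the upwinded phase-pressure differences:
`M_{g,KL}·(p̃(s_L) − p̃(s_K))² ≤ C · ( M_{l,KL}·(δp_l)² + M_{g,KL}·(δp_g)² )`. -/
theorem dissipative_term_ptilde_estimate
    -- global-pressure framework
    (m0 : ℝ) (hm0 : 0 < m0)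
    (pc pc' Ml Mg : ℝ → ℝ)
    (hpc_deriv : ∀ s ∈ Set.Icc (0:ℝ) 1, HasDerivWithinAt pc (pc' s) (Set.Icc 0 1) s)
    (hpc'_cont : ContinuousOn pc' (Set.Icc 0 1))
    (hpc'_neg : ∀ s ∈ Set.Icc (0:ℝ) 1, pc' s < 0)
    (hMl_cont : ContinuousOn Ml (Set.Icc 0 1))
    (hMg_cont : ContinuousOn Mg (Set.Icc 0 1))
    (hMl_nonneg : ∀ s ∈ Set.Icc (0:ℝ) 1, 0 ≤ Ml s)
    (hMg_nonneg : ∀ s ∈ Set.Icc (0:ℝ) 1, 0 ≤ Mg s)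
    (hMl_mono : MonotoneOn Ml (Set.Icc 0 1))
    (hMg_anti : AntitoneOn Mg (Set.Icc 0 1))
    (hM_lower : ∀ s ∈ Set.Icc (0:ℝ) 1, m0 ≤ Ml s + Mg s)
    (ptilde pbar B : ℝ → ℝ)
    (hptilde : ∀ s, ptilde s = -∫ z in (0:ℝ)..s, Ml z / (Ml z + Mg z) * pc' z)
    (hpbar : ∀ s, pbar s = ∫ z in (0:ℝ)..s, Mg z / (Ml z + Mg z) * pc' z)
    (hB : ∀ s, B s = -∫ z in (0:ℝ)..s, Ml z * Mg z / (Ml z + Mg z) * pc' z) :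
    ∃ C : ℝ, 0 < C ∧
      ∀ sK ∈ Set.Icc (0:ℝ) 1, ∀ sL ∈ Set.Icc (0:ℝ) 1,
        ∀ plK plL pgK pgL : ℝ,
          pgK - plK = pbar sK - ptilde sK →
          pgL - plL = pbar sL - ptilde sL →
          (if pgL - pgK ≤ 0 then Mg sK else Mg sL) * (ptilde sL - ptilde sK) ^ 2 ≤
            C * ((if plL - plK ≤ 0 then Ml sK else Ml sL) * (plL - plK) ^ 2
               + (if pgL - pgK ≤ 0 then Mg sK else Mg sL) * (pgL - pgK) ^ 2) :=
  dissipative_term_ptilde_estimate_general m0 hm0 pc' Ml Mg hpc'_cont hpc'_neg hMl_cont hMg_cont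
    hMl_nonneg hMg_nonneg hMl_mono hMg_anti hM_lower ptilde pbar hptilde hpbar
end

section
/- Under the global-pressure framework, if for a given choice of discrete interface data the upwind choices of the two phases differ — that is, either (p_{l,L} − p_{l,K} > 0 and p_{g,L} − p_{g,K} ≤ 0) or (p_{l,L} − p_{l,K} ≤ 0 and p_{g,L} − p_{g,K} > 0) — then for each phase α ∈ {l,g} the upwind interface mobility attains the maximum of M_α over the saturation interval: M_{α,KL} = max(M_α(s_K), M_α(s_L)) = max of M_α over the closed interval with endpoints s_K and s_L. -/
/-!
Since `p_g - p_l = p̄ - p̃` and the fractional flows `M_l / M`, `M_g / M` sum to one,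
`δ(p_g) - δ(p_l) = ∫_{s_K}^{s_L} p_c'`, whose sign is opposite to that of `s_L - s_K`.
If `δ(p_l) > 0 ≥ δ(p_g)`, this difference is negative, so `s_K ≤ s_L`: the liquid is upwinded
from `s_L`, where the nondecreasing `M_l` is largest on `[s_K, s_L]`, and the gas from `s_K`,
where the nonincreasing `M_g` is largest. The other case is symmetric.
-/

open Set

theorem MonotoneOn.le_max_of_mem_uIcc {α β : Type*} [LinearOrder α] [LinearOrder β]
    {f : α → β} {s : Set α} {a b x : α} (hf : MonotoneOn f s) (hs : s.OrdConnected)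
    (ha : a ∈ s) (hb : b ∈ s) (hx : x ∈ uIcc a b) : f x ≤ max (f a) (f b) := by
  have hxs : x ∈ s := hs.uIcc_subset ha hb hx
  rcases le_total a b with hab | hba
  · rw [uIcc_of_le hab] at hx
    exact (hf hxs hb hx.2).trans (le_max_right _ _)
  · rw [uIcc_of_ge hba] at hx
    exact (hf hxs ha hx.2).trans (le_max_left _ _)

theorem AntitoneOn.le_max_of_mem_uIcc {α β : Type*} [LinearOrder α] [LinearOrder β]
    {f : α → β} {s : Set α} {a b x : α} (hf : AntitoneOn f s) (hs : s.OrdConnected)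
    (ha : a ∈ s) (hb : b ∈ s) (hx : x ∈ uIcc a b) : f x ≤ max (f a) (f b) := by
  have hxs : x ∈ s := hs.uIcc_subset ha hb hx
  rcases le_total a b with hab | hba
  · rw [uIcc_of_le hab] at hx
    exact (hf ha hxs hx.1).trans (le_max_left _ _)
  · rw [uIcc_of_ge hba] at hx
    exact (hf hb hxs hx.1).trans (le_max_right _ _)

namespace intervalIntegral

theorem le_of_integral_neg {f : ℝ → ℝ} {a b : ℝ} (hf : ∀ x ∈ uIcc a b, f x ≤ 0)
    (h : ∫ x in a..b, f x < 0) : a ≤ b := by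
  by_contra! hba
  have hneg : 0 ≤ ∫ x in b..a, -f x :=
    integral_nonneg hba.le fun x hx => neg_nonneg.2 (hf x (Icc_subset_uIcc' hx))
  rw [integral_neg, ← integral_symm] at hneg
  exact hneg.not_gt h

theorem integral_div_add_mul_add_integral_div_add_mul {f g h : ℝ → ℝ} {a b : ℝ}
    (hf : ContinuousOn f (uIcc a b)) (hg : ContinuousOn g (uIcc a b))
    (hh : ContinuousOn h (uIcc a b)) (hfg : ∀ x ∈ uIcc a b, f x + g x ≠ 0) :
    (∫ x in a..b, g x / (f x + g x) * h x) + ∫ x in a..b, f x / (f x + g x) * h x =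
      ∫ x in a..b, h x := by
  have hgh : IntervalIntegrable (fun x => g x / (f x + g x) * h x) MeasureTheory.volume a b :=
    ((hg.div (hf.add hg) hfg).mul hh).intervalIntegrable
  have hfh : IntervalIntegrable (fun x => f x / (f x + g x) * h x) MeasureTheory.volume a b :=
    ((hf.div (hf.add hg) hfg).mul hh).intervalIntegrable
  rw [← integral_add hgh hfh]
  refine integral_congr fun x hx => ?_
  field_simp [hfg x hx]
  ring

end intervalIntegral

open intervalIntegral in
theorem upwind_mobility_is_max_when_choices_differ_general
    -- global-pressure framework
    (m0 : ℝ) (hm0 : 0 < m0)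
    (pc' Ml Mg : ℝ → ℝ)
    (hpc'_cont : ContinuousOn pc' (Set.Icc 0 1))
    (hpc'_neg : ∀ s ∈ Set.Icc (0:ℝ) 1, pc' s < 0)
    (hMl_cont : ContinuousOn Ml (Set.Icc 0 1))
    (hMg_cont : ContinuousOn Mg (Set.Icc 0 1))
    (hMl_mono : MonotoneOn Ml (Set.Icc 0 1))
    (hMg_anti : AntitoneOn Mg (Set.Icc 0 1))
    (hM_lower : ∀ s ∈ Set.Icc (0:ℝ) 1, m0 ≤ Ml s + Mg s)
    (ptilde pbar : ℝ → ℝ)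
    (hptilde : ∀ s, ptilde s = -∫ z in (0:ℝ)..s, Ml z / (Ml z + Mg z) * pc' z)
    (hpbar : ∀ s, pbar s = ∫ z in (0:ℝ)..s, Mg z / (Ml z + Mg z) * pc' z)
    -- discrete interface data
    (sK sL : ℝ) (hsK : sK ∈ Set.Icc (0:ℝ) 1) (hsL : sL ∈ Set.Icc (0:ℝ) 1)
    (plK plL pgK pgL : ℝ)
    (hcapK : pgK - plK = pbar sK - ptilde sK)
    (hcapL : pgL - plL = pbar sL - ptilde sL)
    (MlKL MgKL : ℝ)
    (hMlKL : MlKL = if plL - plK ≤ 0 then Ml sK else Ml sL)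
    (hMgKL : MgKL = if pgL - pgK ≤ 0 then Mg sK else Mg sL)
    -- the upwind choices of the two phases differ
    (hdiffer : (0 < plL - plK ∧ pgL - pgK ≤ 0) ∨ (plL - plK ≤ 0 ∧ 0 < pgL - pgK)) :
    (MlKL = max (Ml sK) (Ml sL) ∧ ∀ s ∈ Set.uIcc sK sL, Ml s ≤ MlKL) ∧
    (MgKL = max (Mg sK) (Mg sL) ∧ ∀ s ∈ Set.uIcc sK sL, Mg s ≤ MgKL) := by
  have h01 : (0 : ℝ) ∈ Icc 0 1 := left_mem_Icc.2 zero_le_one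
  have hcap : ∀ s ∈ Icc (0 : ℝ) 1, pbar s - ptilde s = ∫ z in (0:ℝ)..s, pc' z := by
    intro s hs
    have hsub := uIcc_subset_Icc h01 hs
    rw [hpbar, hptilde, sub_neg_eq_add]
    exact integral_div_add_mul_add_integral_div_add_mul (hMl_cont.mono hsub)
      (hMg_cont.mono hsub) (hpc'_cont.mono hsub)
      fun z hz => (hm0.trans_le (hM_lower z (hsub hz))).ne'
  have hjump : (pgL - pgK) - (plL - plK) = ∫ z in sK..sL, pc' z := by
    have hint : ∀ s ∈ Icc (0 : ℝ) 1, IntervalIntegrable pc' MeasureTheory.volume 0 s :=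
      fun s hs => (hpc'_cont.mono (uIcc_subset_Icc h01 hs)).intervalIntegrable
    rw [← integral_interval_sub_left (hint sL hsL) (hint sK hsK), ← hcap sL hsL,
      ← hcap sK hsK]
    linarith
  have hpc'_nonpos :
      ∀ a ∈ Icc (0 : ℝ) 1, ∀ b ∈ Icc (0 : ℝ) 1, ∀ x ∈ uIcc a b, pc' x ≤ 0 :=
    fun a ha b hb x hx => (hpc'_neg x (uIcc_subset_Icc ha hb hx)).le
  have hupwind : MlKL = max (Ml sK) (Ml sL) ∧ MgKL = max (Mg sK) (Mg sL) := by
    rcases hdiffer with ⟨hl, hg⟩ | ⟨hl, hg⟩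
    · have hKL : sK ≤ sL := le_of_integral_neg (hpc'_nonpos sK hsK sL hsL) (by linarith)
      rw [hMlKL, hMgKL, if_neg hl.not_ge, if_pos hg, max_eq_right (hMl_mono hsK hsL hKL),
        max_eq_left (hMg_anti hsK hsL hKL)]
      exact ⟨rfl, rfl⟩
    · have hLK : sL ≤ sK := le_of_integral_neg (hpc'_nonpos sL hsL sK hsK)
        (by rw [integral_symm]; linarith)
      rw [hMlKL, hMgKL, if_pos hl, if_neg hg.not_ge, max_eq_left (hMl_mono hsL hsK hLK),
        max_eq_right (hMg_anti hsL hsK hLK)]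
      exact ⟨rfl, rfl⟩
  exact ⟨⟨hupwind.1, fun s hs =>
      hupwind.1 ▸ hMl_mono.le_max_of_mem_uIcc ordConnected_Icc hsK hsL hs⟩,
    ⟨hupwind.2, fun s hs =>
      hupwind.2 ▸ hMg_anti.le_max_of_mem_uIcc ordConnected_Icc hsK hsL hs⟩⟩

/-- Under the global-pressure framework, if for a given choice of
discrete interface data the upwind choices of the two phases differ, then for each
phase `α ∈ {l,g}` the upwind interface mobility attains the maximum of `M_α` over
the saturation interval:
`M_{α,KL} = max(M_α(s_K), M_α(s_L)) =` max of `M_α` over the closed interval with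
endpoints `s_K` and `s_L`. -/
theorem upwind_mobility_is_max_when_choices_differ
    -- global-pressure framework
    (m0 : ℝ) (hm0 : 0 < m0)
    (pc pc' Ml Mg : ℝ → ℝ)
    (hpc_deriv : ∀ s ∈ Set.Icc (0:ℝ) 1, HasDerivWithinAt pc (pc' s) (Set.Icc 0 1) s)
    (hpc'_cont : ContinuousOn pc' (Set.Icc 0 1))
    (hpc'_neg : ∀ s ∈ Set.Icc (0:ℝ) 1, pc' s < 0)
    (hMl_cont : ContinuousOn Ml (Set.Icc 0 1))
    (hMg_cont : ContinuousOn Mg (Set.Icc 0 1))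
    (hMl_nonneg : ∀ s ∈ Set.Icc (0:ℝ) 1, 0 ≤ Ml s)
    (hMg_nonneg : ∀ s ∈ Set.Icc (0:ℝ) 1, 0 ≤ Mg s)
    (hMl_mono : MonotoneOn Ml (Set.Icc 0 1))
    (hMg_anti : AntitoneOn Mg (Set.Icc 0 1))
    (hM_lower : ∀ s ∈ Set.Icc (0:ℝ) 1, m0 ≤ Ml s + Mg s)
    (ptilde pbar B : ℝ → ℝ)
    (hptilde : ∀ s, ptilde s = -∫ z in (0:ℝ)..s, Ml z / (Ml z + Mg z) * pc' z)
    (hpbar : ∀ s, pbar s = ∫ z in (0:ℝ)..s, Mg z / (Ml z + Mg z) * pc' z)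
    (hB : ∀ s, B s = -∫ z in (0:ℝ)..s, Ml z * Mg z / (Ml z + Mg z) * pc' z)
    -- discrete interface data
    (sK sL : ℝ) (hsK : sK ∈ Set.Icc (0:ℝ) 1) (hsL : sL ∈ Set.Icc (0:ℝ) 1)
    (plK plL pgK pgL : ℝ)
    (hcapK : pgK - plK = pbar sK - ptilde sK)
    (hcapL : pgL - plL = pbar sL - ptilde sL)
    (MlKL MgKL : ℝ)
    (hMlKL : MlKL = if plL - plK ≤ 0 then Ml sK else Ml sL)
    (hMgKL : MgKL = if pgL - pgK ≤ 0 then Mg sK else Mg sL)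
    -- the upwind choices of the two phases differ
    (hdiffer : (0 < plL - plK ∧ pgL - pgK ≤ 0) ∨ (plL - plK ≤ 0 ∧ 0 < pgL - pgK)) :
    (MlKL = max (Ml sK) (Ml sL) ∧ ∀ s ∈ Set.uIcc sK sL, Ml s ≤ MlKL) ∧
    (MgKL = max (Mg sK) (Mg sL) ∧ ∀ s ∈ Set.uIcc sK sL, Mg s ≤ MgKL) :=
  upwind_mobility_is_max_when_choices_differ_general m0 hm0 pc' Ml Mg hpc'_cont hpc'_neg hMl_cont
    hMg_cont hMl_mono hMg_anti hM_lower ptilde pbar hptilde hpbar sK sL hsK hsL plK plL pgK pgL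
    hcapK hcapL MlKL MgKL hMlKL hMgKL hdiffer
end

section
/- Energy inequality for the discrete time derivative: for all saturations s_l, s_g, s_l*, s_g* ≥ 0 with s_l + s_g = 1 and s_l* + s_g* = 1, and all real pressures p_l, p_g, p_l*, p_g* satisfying the capillary relation p_g − p_l = p_c(s_l), one has (ρ_l(p_l)·s_l − ρ_l(p_l*)·s_l*)·g_l(p_l) + (ρ_g(p_g)·s_g − ρ_g(p_g*)·s_g*)·g_g(p_g) ≥ H_l(p_l)·s_l − H_l(p_l*)·s_l* + H_g(p_g)·s_g − H_g(p_g*)·s_g* − P_c(s_l) + P_c(s_l*). -/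
/-!
`g_l`, `g_g` and `P_c` are concave, being primitives of the antitone functions `1 / ρ_l`,
`1 / ρ_g` and `p_c`, so each lies below its tangents. The tangent inequalities for `g_α` at
`p_α*` (weighted by `s_α*`) and for `P_c` at `s_l` add up to the claim: the remaining terms
`p_l (s_l - s_l*) + p_g (s_g - s_g*)` collapse, since `s_g - s_g* = s_l* - s_l`, to
`(p_g - p_l)(s_l* - s_l) = p_c(s_l)(s_l* - s_l)`.
-/

open Set intervalIntegral

theorem AntitoneOn.integral_sub_integral_le {f : ℝ → ℝ} {s : Set ℝ} (hf : AntitoneOn f s)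
    (hs : s.OrdConnected) {c a b : ℝ} (hc : c ∈ s) (ha : a ∈ s) (hb : b ∈ s) :
    (∫ x in c..b, f x) - (∫ x in c..a, f x) ≤ (b - a) * f a := by
  have hint : ∀ {u v}, u ∈ s → v ∈ s → IntervalIntegrable f MeasureTheory.volume u v :=
    fun hu hv => (hf.mono (hs.uIcc_subset hu hv)).intervalIntegrable
  rw [integral_interval_sub_left (hint hc hb) (hint hc ha)]
  rcases le_total a b with hab | hba
  · calc (∫ x in a..b, f x) ≤ ∫ _ in a..b, f a :=
          integral_mono_on hab (hint ha hb) intervalIntegrable_const fun x hx =>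
            hf ha (hs.out ha hb ⟨hx.1, hx.2⟩) hx.1
      _ = (b - a) * f a := by rw [integral_const, smul_eq_mul]
  · have : ∫ _ in b..a, f a ≤ ∫ x in b..a, f x :=
      integral_mono_on hba intervalIntegrable_const (hint hb ha) fun x hx =>
        hf (hs.out hb ha ⟨hx.1, hx.2⟩) ha hx.2
    rw [integral_const, smul_eq_mul] at this
    rw [integral_symm]
    linarith

theorem mul_sub_le_sub_of_integral_inv {ρ g : ℝ → ℝ} (hmono : Monotone ρ) (hpos : ∀ z, 0 < ρ z)
    (hg : ∀ p, g p = ∫ z in (0:ℝ)..p, 1 / ρ z) (p p' : ℝ) :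
    ρ p' * (g p - g p') ≤ p - p' := by
  have hanti : AntitoneOn (fun z => 1 / ρ z) univ := fun x _ y _ hxy =>
    one_div_le_one_div_of_le (hpos x) (hmono hxy)
  have htangent := hanti.integral_sub_integral_le ordConnected_univ
    (mem_univ 0) (mem_univ p') (mem_univ p)
  rw [← hg, ← hg] at htangent
  calc ρ p' * (g p - g p') ≤ ρ p' * ((p - p') * (1 / ρ p')) :=
        mul_le_mul_of_nonneg_left htangent (hpos p').le
    _ = p - p' := by field_simp [(hpos p').ne']

theorem discrete_time_derivative_energy_inequality_general
    (ρl ρg : ℝ → ℝ) (ρm : ℝ) (hρm : 0 < ρm)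
    (hρl_mono : Monotone ρl) (hρg_mono : Monotone ρg)
    (hρl_low : ∀ z, ρm ≤ ρl z) (hρg_low : ∀ z, ρm ≤ ρg z)
    (gl gg Hl Hg : ℝ → ℝ)
    (hgl : ∀ p, gl p = ∫ z in (0:ℝ)..p, 1 / ρl z)
    (hgg : ∀ p, gg p = ∫ z in (0:ℝ)..p, 1 / ρg z)
    (hHl : ∀ p, Hl p = ρl p * gl p - p)
    (hHg : ∀ p, Hg p = ρg p * gg p - p)
    (pc Pc : ℝ → ℝ)
    (hpc_anti : AntitoneOn pc (Set.Icc 0 1))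
    (hPc : ∀ s, Pc s = ∫ z in (0:ℝ)..s, pc z)
    (sl sg sl' sg' : ℝ)
    (hsl : 0 ≤ sl) (hsg : 0 ≤ sg) (hsl' : 0 ≤ sl') (hsg' : 0 ≤ sg')
    (hsum : sl + sg = 1) (hsum' : sl' + sg' = 1)
    (pl pg pl' pg' : ℝ)
    (hcap : pg - pl = pc sl) :
    Hl pl * sl - Hl pl' * sl' + Hg pg * sg - Hg pg' * sg' - Pc sl + Pc sl'
      ≤ (ρl pl * sl - ρl pl' * sl') * gl pl
        + (ρg pg * sg - ρg pg' * sg') * gg pg := by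
  have hl := mul_sub_le_sub_of_integral_inv hρl_mono (fun z => hρm.trans_le (hρl_low z)) hgl pl pl'
  have hg := mul_sub_le_sub_of_integral_inv hρg_mono (fun z => hρm.trans_le (hρg_low z)) hgg pg pg'
  have hcapillary := hpc_anti.integral_sub_integral_le ordConnected_Icc
    (left_mem_Icc.2 zero_le_one) ⟨hsl, by linarith⟩ ⟨hsl', by linarith⟩
  rw [← hPc, ← hPc] at hcapillary
  rw [hHl, hHl, hHg, hHg]
  linear_combination sl' * hl + sg' * hg + hcapillary + (sl - sl') * hcap + pg * (hsum' - hsum)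

/-- Energy inequality for the discrete time derivative: for all
saturations `s_l, s_g, s_l*, s_g* ≥ 0` with `s_l + s_g = 1`, `s_l* + s_g* = 1`,
and all real pressures `p_l, p_g, p_l*, p_g*` satisfying the capillary relation
`p_g − p_l = p_c(s_l)`, one has
`(ρ_l(p_l)s_l − ρ_l(p_l*)s_l*)g_l(p_l) + (ρ_g(p_g)s_g − ρ_g(p_g*)s_g*)g_g(p_g)
  ≥ H_l(p_l)s_l − H_l(p_l*)s_l* + H_g(p_g)s_g − H_g(p_g*)s_g* − P_c(s_l) + P_c(s_l*)`. -/
theorem discrete_time_derivative_energy_inequality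
    (ρl ρg : ℝ → ℝ) (ρm : ℝ) (hρm : 0 < ρm)
    (hρl_smooth : ContDiff ℝ 1 ρl) (hρg_smooth : ContDiff ℝ 1 ρg)
    (hρl_mono : Monotone ρl) (hρg_mono : Monotone ρg)
    (hρl_low : ∀ z, ρm ≤ ρl z) (hρg_low : ∀ z, ρm ≤ ρg z)
    (gl gg Hl Hg : ℝ → ℝ)
    (hgl : ∀ p, gl p = ∫ z in (0:ℝ)..p, 1 / ρl z)
    (hgg : ∀ p, gg p = ∫ z in (0:ℝ)..p, 1 / ρg z)
    (hHl : ∀ p, Hl p = ρl p * gl p - p)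
    (hHg : ∀ p, Hg p = ρg p * gg p - p)
    (pc Pc : ℝ → ℝ)
    (hpc_cont : ContinuousOn pc (Set.Icc 0 1))
    (hpc_anti : AntitoneOn pc (Set.Icc 0 1))
    (hPc : ∀ s, Pc s = ∫ z in (0:ℝ)..s, pc z)
    (sl sg sl' sg' : ℝ)
    (hsl : 0 ≤ sl) (hsg : 0 ≤ sg) (hsl' : 0 ≤ sl') (hsg' : 0 ≤ sg')
    (hsum : sl + sg = 1) (hsum' : sl' + sg' = 1)
    (pl pg pl' pg' : ℝ)
    (hcap : pg - pl = pc sl) :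
    Hl pl * sl - Hl pl' * sl' + Hg pg * sg - Hg pg' * sg' - Pc sl + Pc sl'
      ≤ (ρl pl * sl - ρl pl' * sl') * gl pl
        + (ρg pg * sg - ρg pg' * sg') * gg pg :=
  discrete_time_derivative_energy_inequality_general ρl ρg ρm hρm hρl_mono hρg_mono hρl_low hρg_low
    gl gg Hl Hg hgl hgg hHl hHg pc Pc hpc_anti hPc sl sg sl' sg' hsl hsg hsl' hsg' hsum hsum' pl pg
    pl' pg' hcap
end

section
/- Maximum principle for the upwind finite volume scheme (one time step): suppose that for every cell K and each phase α ∈ {l,g} the scheme equation holds: |K|·φ_K·(ρ_α(p^{n+1}_{α,K})·s^{n+1}_{α,K} − ρ_α(p^{n}_{α,K})·s^{n}_{α,K})/δt + Σ_{L∈N(K)} τ_{KL}·ρ_{α,KL}·G_α(s^{n+1}_{α,K}, s^{n+1}_{α,L}; p^{n+1}_{α,L} − p^{n+1}_{α,K}) + F_{α,K} + |K|·ρ_α(p^{n+1}_{α,K})·s^{n+1}_{α,K}·f_{P,K} = |K|·ρ_α(p^{n+1}_{α,K})·s^I_{α,K}·f_{I,K}, where F_{α,K} = Σ_{L∈N(K)}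 σ_{KL}·(ρ_{α,KL})²·( M_α(s^{n+1}_{α,K})·g_{KL}⁺ − M_α(s^{n+1}_{α,L})·g_{KL}⁻ ). If the old saturations satisfy s^{n}_{α,K} ≥ 0 and s^{n}_{l,K} + s^{n}_{g,K} = 1 for every K, and the new saturations satisfy s^{n+1}_{l,K} + s^{n+1}_{g,K} = 1 for every K, then 0 ≤ s^{n+1}_{α,K} ≤ 1 for every cell K and both phases α. -/
/-!
If a new saturation `s` were negative, the mobility of its phase would vanish in that cell, so
neither the upwind Darcy fluxes nor the gravity fluxes could carry that phase out of the cell: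
all its fluxes are nonpositive. The accumulation term `ρ(pⁿ⁺¹) s - ρ(pⁿ) sⁿ` is then negative
and so is the production sink, while the injection is nonnegative, which contradicts the
scheme equation. The upper bound follows from the nonnegativity of the other phase and
`s_l + s_g = 1`.
-/

lemma upwind_flux_nonpos_of_mobility_eq_zero {mK mL c : ℝ} (hmK : mK = 0) (hmL : 0 ≤ mL) :
    -mL * max c 0 + mK * max (-c) 0 ≤ 0 := by
  subst hmK
  nlinarith [le_max_right c 0]

lemma gravity_flux_nonpos_of_mobility_eq_zero {mK mL g : ℝ} (hmK : mK = 0) (hmL : 0 ≤ mL) :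
    mK * max g 0 - mL * max (-g) 0 ≤ 0 := by
  subst hmK
  nlinarith [le_max_right (-g) 0]

/-- `hbalance` is one cell's scheme equation: accumulation, Darcy and gravity fluxes `F₁`, `F₂`,
production sink, and injection `q`. -/
lemma nonneg_of_mass_balance {V φ δt ρ ρ₀ s s₀ F₁ F₂ fP q : ℝ}
    (hV : 0 < V) (hφ : 0 < φ) (hδt : 0 < δt) (hρ : 0 < ρ) (hρ₀ : 0 < ρ₀)
    (hs₀ : 0 ≤ s₀) (hfP : 0 ≤ fP) (hq : 0 ≤ q)
    (hF₁ : s < 0 → F₁ ≤ 0) (hF₂ : s < 0 → F₂ ≤ 0)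
    (hbalance : V * φ * (ρ * s - ρ₀ * s₀) / δt + F₁ + F₂ + V * ρ * s * fP = q) :
    0 ≤ s := by
  by_contra! hs
  have hmass : ρ * s - ρ₀ * s₀ < 0 := by nlinarith
  have haccumulation : V * φ * (ρ * s - ρ₀ * s₀) / δt < 0 :=
    div_neg_of_neg_of_pos (mul_neg_of_pos_of_neg (mul_pos hV hφ) hmass) hδt
  have hsink : V * ρ * s * fP ≤ 0 :=
    mul_nonpos_of_nonpos_of_nonneg (mul_neg_of_pos_of_neg (mul_pos hV hρ) hs).le hfP
  linarith [hF₁ hs, hF₂ hs]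

theorem maximum_principle_upwind_scheme_general
    {ι : Type*}
    -- mesh data
    (N : ι → Finset ι)
    (τ σ : ι → ι → ℝ)
    (hτ_pos : ∀ K L, L ∈ N K → 0 < τ K L)
    (hσ_pos : ∀ K L, L ∈ N K → 0 < σ K L)
    (vol φ : ι → ℝ)
    (hvol_pos : ∀ K, 0 < vol K) (hφ_pos : ∀ K, 0 < φ K)
    (δt : ℝ) (hδt : 0 < δt)
    -- phase data
    (ρ : Fin 2 → ℝ → ℝ) (hρ_pos : ∀ α z, 0 < ρ α z)
    (ρKL : Fin 2 → ι → ι → ℝ)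
    (hρKL_pos : ∀ α K L, L ∈ N K → 0 < ρKL α K L)
    (M : Fin 2 → ℝ → ℝ)
    (hM_nonneg : ∀ α x, 0 ≤ M α x)
    (hM_zero : ∀ α x, x ≤ 0 → M α x = 0)
    -- gravity data
    (g : ι → ι → ℝ)
    -- source data
    (fP fI : ι → ℝ) (hfP : ∀ K, 0 ≤ fP K) (hfI : ∀ K, 0 ≤ fI K)
    (sI : Fin 2 → ι → ℝ) (hsI : ∀ α K, 0 ≤ sI α K)
    -- unknowns at the new time step and data at the old time step
    (pNew pOld sNew sOld : Fin 2 → ι → ℝ)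
    -- the scheme equations
    (hscheme : ∀ α K,
      vol K * φ K *
          (ρ α (pNew α K) * sNew α K - ρ α (pOld α K) * sOld α K) / δt
        + ∑ L ∈ N K, τ K L * ρKL α K L *
            (-(M α (sNew α L)) * max (pNew α L - pNew α K) 0
              + M α (sNew α K) * max (-(pNew α L - pNew α K)) 0)
        + ∑ L ∈ N K, σ K L * (ρKL α K L) ^ 2 *
            (M α (sNew α K) * max (g K L) 0 - M α (sNew α L) * max (-(g K L)) 0)
        + vol K * ρ α (pNew α K) * sNew α K * fP K
      = vol K * ρ α (pNew α K) * sI α K * fI K)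
    -- old saturations
    (hOld_nonneg : ∀ α K, 0 ≤ sOld α K)
    -- new saturations occupy the whole pore space
    (hNew_sum : ∀ K, sNew 0 K + sNew 1 K = 1) :
    ∀ α K, 0 ≤ sNew α K ∧ sNew α K ≤ 1 := by
  have nonneg : ∀ α K, 0 ≤ sNew α K := fun α K =>
    nonneg_of_mass_balance (hvol_pos K) (hφ_pos K) hδt (hρ_pos α _) (hρ_pos α _)
      (hOld_nonneg α K) (hfP K)
      (mul_nonneg (mul_nonneg (mul_nonneg (hvol_pos K).le (hρ_pos α _).le) (hsI α K)) (hfI K))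
      (fun hs => Finset.sum_nonpos fun L hL =>
        mul_nonpos_of_nonneg_of_nonpos (mul_pos (hτ_pos K L hL) (hρKL_pos α K L hL)).le
          (upwind_flux_nonpos_of_mobility_eq_zero (hM_zero α _ hs.le) (hM_nonneg α _)))
      (fun hs => Finset.sum_nonpos fun L hL =>
        mul_nonpos_of_nonneg_of_nonpos (mul_nonneg (hσ_pos K L hL).le (sq_nonneg _))
          (gravity_flux_nonpos_of_mobility_eq_zero (hM_zero α _ hs.le) (hM_nonneg α _)))
      (hscheme α K)
  intro α K
  refine ⟨nonneg α K, ?_⟩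
  calc sNew α K ≤ ∑ β, sNew β K := Finset.single_le_sum (fun β _ => nonneg β K) (Finset.mem_univ α)
    _ = 1 := by rw [Fin.sum_univ_two, hNew_sum K]

/-- Maximum principle for the upwind finite volume scheme (one time
step). Cells are indexed by a nonempty finite type `ι`, the two phases by `Fin 2`.
If the scheme equations hold for every cell and phase, the old saturations are
nonnegative and sum to one, and the new saturations sum to one, then every new
saturation lies in `[0,1]`. -/
theorem maximum_principle_upwind_scheme
    {ι : Type*} [Fintype ι] [Nonempty ι]
    -- mesh data
    (N : ι → Finset ι)
    (hN_symm : ∀ K L, L ∈ N K ↔ K ∈ N L)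
    (hN_irrefl : ∀ K, K ∉ N K)
    (τ σ : ι → ι → ℝ)
    (hτ_pos : ∀ K L, L ∈ N K → 0 < τ K L)
    (hτ_symm : ∀ K L, L ∈ N K → τ K L = τ L K)
    (hσ_pos : ∀ K L, L ∈ N K → 0 < σ K L)
    (hσ_symm : ∀ K L, L ∈ N K → σ K L = σ L K)
    (vol φ : ι → ℝ)
    (hvol_pos : ∀ K, 0 < vol K) (hφ_pos : ∀ K, 0 < φ K)
    (δt : ℝ) (hδt : 0 < δt)
    -- phase data
    (ρ : Fin 2 → ℝ → ℝ) (hρ_pos : ∀ α z, 0 < ρ α z)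
    (ρKL : Fin 2 → ι → ι → ℝ)
    (hρKL_pos : ∀ α K L, L ∈ N K → 0 < ρKL α K L)
    (hρKL_symm : ∀ α K L, L ∈ N K → ρKL α K L = ρKL α L K)
    (M : Fin 2 → ℝ → ℝ)
    (hM_cont : ∀ α, Continuous (M α))
    (hM_mono : ∀ α, Monotone (M α))
    (hM_nonneg : ∀ α x, 0 ≤ M α x)
    (hM_zero : ∀ α x, x ≤ 0 → M α x = 0)
    -- gravity data
    (g : ι → ι → ℝ) (hg_antisymm : ∀ K L, g K L = -g L K)
    -- source data
    (fP fI : ι → ℝ) (hfP : ∀ K, 0 ≤ fP K) (hfI : ∀ K, 0 ≤ fI K)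
    (sI : Fin 2 → ι → ℝ) (hsI : ∀ α K, 0 ≤ sI α K)
    -- unknowns at the new time step and data at the old time step
    (pNew pOld sNew sOld : Fin 2 → ι → ℝ)
    -- the scheme equations
    (hscheme : ∀ α K,
      vol K * φ K *
          (ρ α (pNew α K) * sNew α K - ρ α (pOld α K) * sOld α K) / δt
        + ∑ L ∈ N K, τ K L * ρKL α K L *
            (-(M α (sNew α L)) * max (pNew α L - pNew α K) 0
              + M α (sNew α K) * max (-(pNew α L - pNew α K)) 0)
        + ∑ L ∈ N K, σ K L * (ρKL α K L) ^ 2 *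
            (M α (sNew α K) * max (g K L) 0 - M α (sNew α L) * max (-(g K L)) 0)
        + vol K * ρ α (pNew α K) * sNew α K * fP K
      = vol K * ρ α (pNew α K) * sI α K * fI K)
    -- old saturations
    (hOld_nonneg : ∀ α K, 0 ≤ sOld α K)
    (hOld_sum : ∀ K, sOld 0 K + sOld 1 K = 1)
    -- new saturations occupy the whole pore space
    (hNew_sum : ∀ K, sNew 0 K + sNew 1 K = 1) :
    ∀ α K, 0 ≤ sNew α K ∧ sNew α K ≤ 1 :=
  maximum_principle_upwind_scheme_general N τ σ hτ_pos hσ_pos vol φ hvol_pos hφ_pos δt hδt ρ hρ_pos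
    ρKL hρKL_pos M hM_nonneg hM_zero g fP fI hfP hfI sI hsI pNew pOld sNew sOld hscheme hOld_nonneg
    hNew_sum
end

section
/- Interface density identity: let ρ : ℝ → ℝ be continuous with 0 < ρ_m ≤ ρ(z) ≤ ρ_M for all z, let g(p) = ∫₀ᵖ (1/ρ(z)) dz, and for real numbers p_K ≠ p_L define the interface density ρ_{KL} by 1/ρ_{KL} = (1/(p_L − p_K))·∫_{p_K}^{p_L} (1/ρ(ζ)) dζ (and ρ_{KL} = ρ(p_K) if p_K = p_L). Then ρ_{KL} is well defined with ρ_m ≤ ρ_{KL} ≤ ρ_M, and for all p_K, p_L ∈ ℝ one has ρ_{KL}·(g(p_K) − g(p_L)) = p_K − p_L. -/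
/-!
By the mean value theorem for integrals, the mean of `1 / ρ` over the interval between `p_K` and
`p_L` is `1 / ρ(c)` for an intermediate pressure `c`, so `ρ_{KL} = ρ(c)` lies between `ρ_m` and
`ρ_M`. The identity is the definition of `ρ_{KL}` rewritten with `g(p_K) - g(p_L)` as the integral
of `1 / ρ` from `p_L` to `p_K`.
-/

open MeasureTheory Set intervalIntegral

theorem integral_eq_sub_smul_interval_average {E : Type*} [NormedAddCommGroup E]
    [NormedSpace ℝ E] (f : ℝ → E) (a b : ℝ) :
    ∫ x in a..b, f x = (b - a) • ⨍ x in a..b, f x := by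
  rcases eq_or_ne a b with rfl | hab
  · simp
  · rw [interval_average_eq, smul_inv_smul₀ (sub_ne_zero.mpr hab.symm)]

theorem exists_eq_of_inv_eq_interval_average_inv {f : ℝ → ℝ} {a b r : ℝ} (hab : a ≠ b)
    (hf : ContinuousOn f (uIcc a b)) (hf₀ : ∀ x ∈ uIcc a b, f x ≠ 0)
    (hr : r⁻¹ = ⨍ x in a..b, 1 / f x) :
    ∃ c ∈ uIoo a b, r = f c := by
  obtain ⟨c, hc, hfc⟩ := exists_eq_interval_average hab
    (f := fun x => 1 / f x) (continuousOn_const.div hf hf₀)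
  exact ⟨c, hc, by rw [← inv_inv r, hr, ← hfc, one_div, inv_inv]⟩

/-- Interface density identity: let `ρ : ℝ → ℝ` be continuous with
`0 < ρ_m ≤ ρ(z) ≤ ρ_M`, let `g(p) = ∫₀ᵖ 1/ρ(z) dz`, and define the interface
density `ρ_{KL}` by `1/ρ_{KL} = (1/(p_L − p_K))·∫_{p_K}^{p_L} 1/ρ(ζ) dζ` for
`p_K ≠ p_L` and `ρ_{KL} = ρ(p_K)` otherwise. Then `ρ_{KL}` is well defined with
`ρ_m ≤ ρ_{KL} ≤ ρ_M`, and `ρ_{KL}·(g(p_K) − g(p_L)) = p_K − p_L` for all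
`p_K, p_L`. -/
theorem interface_density_identity
    (ρ : ℝ → ℝ) (ρm ρM : ℝ) (hρm : 0 < ρm)
    (hρ_cont : Continuous ρ)
    (hρ_low : ∀ z, ρm ≤ ρ z) (hρ_up : ∀ z, ρ z ≤ ρM)
    (g : ℝ → ℝ) (hg : ∀ p, g p = ∫ z in (0:ℝ)..p, 1 / ρ z)
    (ρKL : ℝ → ℝ → ℝ)
    (hρKL : ∀ pK pL, pK ≠ pL →
      (ρKL pK pL)⁻¹ = 1 / (pL - pK) * ∫ ζ in pK..pL, 1 / ρ ζ)
    (hρKL_eq : ∀ pK, ρKL pK pK = ρ pK) :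
    ∀ pK pL, (ρm ≤ ρKL pK pL ∧ ρKL pK pL ≤ ρM) ∧
      ρKL pK pL * (g pK - g pL) = pK - pL := by
  intro pK pL
  have hρ_pos (z : ℝ) : 0 < ρ z := hρm.trans_le (hρ_low z)
  rcases eq_or_ne pK pL with rfl | hne
  · exact ⟨hρKL_eq pK ▸ ⟨hρ_low pK, hρ_up pK⟩, by simp⟩
  have hmean : (ρKL pK pL)⁻¹ = ⨍ ζ in pK..pL, 1 / ρ ζ := by
    rw [hρKL pK pL hne, interval_average_eq, smul_eq_mul, one_div]
  obtain ⟨c, -, hc⟩ := exists_eq_of_inv_eq_interval_average_inv hne hρ_cont.continuousOn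
    (fun z _ => (hρ_pos z).ne') hmean
  refine ⟨hc ▸ ⟨hρ_low c, hρ_up c⟩, ?_⟩
  have h_int (a b : ℝ) : IntervalIntegrable (fun z => 1 / ρ z) volume a b :=
    (continuous_const.div hρ_cont fun z => (hρ_pos z).ne').intervalIntegrable a b
  calc ρKL pK pL * (g pK - g pL) = ρKL pK pL * ∫ ζ in pL..pK, 1 / ρ ζ := by
        rw [hg, hg, integral_interval_sub_left (h_int 0 pK) (h_int 0 pL)]
    _ = ρKL pK pL * ((pK - pL) * (ρKL pK pL)⁻¹) := by
        rw [integral_eq_sub_smul_interval_average, interval_average_symm, ← hmean, smul_eq_mul]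
    _ = pK - pL := by
        rw [mul_left_comm, mul_inv_cancel₀ (hc ▸ (hρ_pos c).ne'), mul_one]
end
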